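/- arXiv:math/0703730 — 9 statements merged into one kernel-verified Lean document; each statement's English description precedes it below -/
import Mathlib

section
/- Let $A \subset B$ be an extension of integral domains, where $A$ is a unique factorization domain, the units of $B$ that lie in $A$ are already units of $A$ (i.e. $B^* \cap A \subset A^*$), and $B$ is flat as an $A$-module. Then $Q(A) \cap B = A$, i.e. every element of $B$ that can be written as a fraction of two elements of $A$ (inside the fraction field of $B$) already lies in $A$. -/
/-!
Write `x = p / q` in lowest terms, which is possible as `A` is a UFD; flatness makes `B`
torsion-free, so the common factor cancels in `B` as well. The equational criterion for flatness
turns the relation `q • x = p • 1` in `B` into one over `A`; since `q` is prime to `p`, it divides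
every coefficient expressing `1`, so `q` becomes a unit in `B`, hence in `A`, and `x = p q⁻¹ ∈ A`.
-/

theorem Module.Flat.exists_smul_eq_of_smul_eq_smul {A M : Type*} [CommRing A]
    [DecompositionMonoid A] [AddCommGroup M] [Module A M] [Module.Flat A M] {p q : A}
    (hpq : IsRelPrime p q) {x m : M} (h : q • x = p • m) : ∃ d : M, q • d = m := by
  have hrel : ∑ i, ![q, -p] i • ![x, m] i = 0 := by simp [h]
  obtain ⟨k, a, y, hy, ha⟩ := Module.Flat.isTrivialRelation_of_sum_smul_eq_zero hrel
  have hdvd (j : Fin k) : q ∣ a 1 j := by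
    have hj : q * a 0 j - p * a 1 j = 0 := by simpa [sub_eq_add_neg] using ha j
    exact hpq.symm.dvd_of_dvd_mul_left ⟨a 0 j, by linear_combination -hj⟩
  choose c hc using hdvd
  have hm : m = ∑ j, a 1 j • y j := hy 1
  exact ⟨∑ j, c j • y j, by simp only [hm, hc, Finset.smul_sum, mul_smul]⟩

theorem Algebra.exists_isRelPrime_smul_eq_smul_one {A B : Type*} [CommRing A] [IsDomain A]
    [UniqueFactorizationMonoid A] [CommRing B] [Algebra A B] [Module.Flat A B] {x : B} {p q : A}
    (hq : q ≠ 0) (hx : x * algebraMap A B q = algebraMap A B p) :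
    ∃ p' q' : A, IsRelPrime p' q' ∧ q' • x = p' • (1 : B) := by
  obtain ⟨q', p', c, hrel, rfl, rfl⟩ := UniqueFactorizationMonoid.exists_reduced_factors q hq p
  have hc : c ∈ nonZeroDivisors A := mem_nonZeroDivisors_of_ne_zero (left_ne_zero_of_mul hq)
  refine ⟨p', q', hrel.symm, Module.Flat.isSMulRegular_of_nonZeroDivisors hc ?_⟩
  simpa [Algebra.smul_def, mul_comm, mul_left_comm] using hx

theorem stmt_0_general {A B : Type*} [CommRing A] [IsDomain A] [UniqueFactorizationMonoid A]
    [CommRing B] [Algebra A B]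
    [Module.Flat A B]
    (hunits : ∀ a : A, IsUnit (algebraMap A B a) → IsUnit a)
    (x : B) (hx : ∃ p q : A, q ≠ 0 ∧ x * algebraMap A B q = algebraMap A B p) :
    ∃ a : A, algebraMap A B a = x := by
  obtain ⟨p, q, hq, hpq⟩ := hx
  obtain ⟨p', q', hrel, hx'⟩ := Algebra.exists_isRelPrime_smul_eq_smul_one hq hpq
  obtain ⟨d, hd⟩ := Module.Flat.exists_smul_eq_of_smul_eq_smul hrel hx'
  obtain ⟨u, rfl⟩ := hunits q' (IsUnit.of_mul_eq_one d (by rwa [← Algebra.smul_def]))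
  refine ⟨↑u⁻¹ * p', ?_⟩
  rw [map_mul, ← Algebra.smul_def, Algebra.algebraMap_eq_smul_one, ← hx', smul_smul,
    Units.inv_mul, one_smul]

/-- Bass' lemma: if `A ⊆ B` are integral domains, `A` a UFD, units of `B` lying in `A`
are units of `A`, and `B` is flat over `A`, then `Q(A) ∩ B = A`. -/
theorem stmt_0 {A B : Type*} [CommRing A] [IsDomain A] [UniqueFactorizationMonoid A]
    [CommRing B] [IsDomain B] [Algebra A B]
    (hinj : Function.Injective (algebraMap A B))
    [Module.Flat A B]
    (hunits : ∀ a : A, IsUnit (algebraMap A B a) → IsUnit a)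
    (x : B) (hx : ∃ p q : A, q ≠ 0 ∧ x * algebraMap A B q = algebraMap A B p) :
    ∃ a : A, algebraMap A B a = x :=
  stmt_0_general hunits x hx
end

section
/- Let $A$ and $B$ be integral domains contained in a common integral domain $C$. If $A$ is a unique factorization domain, $C$ is flat as an $A$-module, and $C^* \cap A \subset A^*$, then $Q(A) \cap B = A \cap B$, where $Q(A)$ is the field of fractions of $A$ viewed inside the field of fractions of $C$. -/
/-!
Write `x * q = p` with `p, q` coprime in the UFD `A`. Coprimality says that `q` is a
nonzerodivisor on `A / pA`, and flatness carries this to `C / pC`; since `q x ∈ pC`, we get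
`x = p c`. Cancelling `p` from `p c q = p` makes `q` a unit of `C`, hence of `A`, so
`x = p q⁻¹ ∈ A`.
-/

theorem IsSMulRegular.quotient_smul_top_of_flat {R M : Type*} [CommRing R] [AddCommGroup M]
    [Module R M] [Module.Flat R M] {I : Ideal R} {r : R} (h : IsSMulRegular (R ⧸ I) r) :
    IsSMulRegular (M ⧸ I • (⊤ : Submodule R M)) r :=
  ((TensorProduct.quotTensorEquivQuotSMul M I).toEquiv.isSMulRegular_congr
    ((TensorProduct.quotTensorEquivQuotSMul M I).map_smul r)).mp (h.rTensor M)

theorem IsRelPrime.isSMulRegular_quotient_span_singleton {R : Type*} [CommRing R]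
    [DecompositionMonoid R] {p q : R} (h : IsRelPrime p q) :
    IsSMulRegular (R ⧸ Ideal.span {p}) q := by
  refine IsSMulRegular.of_right_eq_zero_of_smul fun a ha => ?_
  obtain ⟨a, rfl⟩ := Ideal.Quotient.mk_surjective a
  rw [Algebra.smul_def, Ideal.Quotient.algebraMap_eq, ← map_mul,
    Ideal.Quotient.eq_zero_iff_dvd] at ha
  exact (Ideal.Quotient.eq_zero_iff_dvd p a).mpr (h.dvd_of_dvd_mul_left ha)

theorem Module.Flat.algebraMap_dvd_of_dvd_mul_left {A C : Type*} [CommRing A] [CommRing C]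
    [Algebra A C] [Module.Flat A C] {p q : A} (hq : IsSMulRegular (A ⧸ Ideal.span {p}) q)
    {x : C} (h : algebraMap A C p ∣ algebraMap A C q * x) : algebraMap A C p ∣ x := by
  have mem_iff (y : C) : y ∈ Ideal.span {p} • (⊤ : Submodule A C) ↔ algebraMap A C p ∣ y := by
    rw [Submodule.ideal_span_singleton_smul, Submodule.mem_smul_pointwise_iff_exists]
    simp [Algebra.smul_def, dvd_def, eq_comm]
  rw [← mem_iff, ← Submodule.Quotient.mk_eq_zero]
  refine hq.quotient_smul_top_of_flat.right_eq_zero_of_smul ?_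
  rwa [← Submodule.Quotient.mk_smul, Submodule.Quotient.mk_eq_zero, mem_iff, Algebra.smul_def]

open UniqueFactorizationMonoid in
theorem exists_algebraMap_eq_of_mul_algebraMap_eq {A C : Type*} [CommRing A] [IsDomain A]
    [UniqueFactorizationMonoid A] [CommRing C] [IsDomain C] [Algebra A C] [Module.Flat A C]
    (hunits : ∀ a : A, IsUnit (algebraMap A C a) → IsUnit a)
    {x : C} {p q : A} (hq : q ≠ 0) (hx : x * algebraMap A C q = algebraMap A C p) :
    ∃ a : A, algebraMap A C a = x := by
  -- A flat module over a domain is torsion-free.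
  have hinj : Function.Injective (algebraMap A C) :=
    Module.isTorsionFree_iff_algebraMap_injective.mp inferInstance
  obtain ⟨p', q', d, hrel, rfl, rfl⟩ := exists_reduced_factors' p q hq
  have hd : algebraMap A C d ≠ 0 := (map_ne_zero_iff _ hinj).mpr (left_ne_zero_of_mul hq)
  have hx' : x * algebraMap A C q' = algebraMap A C p' := by
    apply mul_left_cancel₀ hd
    simpa only [map_mul, mul_left_comm] using hx
  obtain ⟨c, rfl⟩ : algebraMap A C p' ∣ x :=
    Module.Flat.algebraMap_dvd_of_dvd_mul_left hrel.isSMulRegular_quotient_span_singleton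
      ⟨1, by rw [mul_one, mul_comm, hx']⟩
  obtain ⟨u, rfl⟩ : IsUnit q' := by
    rcases eq_or_ne p' 0 with rfl | hp'
    · exact isRelPrime_zero_left.mp hrel
    have hcq : c * algebraMap A C q' = 1 := by
      apply mul_left_cancel₀ ((map_ne_zero_iff _ hinj).mpr hp')
      rw [← mul_assoc, hx', mul_one]
    exact hunits q' (.of_mul_eq_one_right c hcq)
  refine ⟨p' * ↑u⁻¹, ?_⟩
  calc algebraMap A C (p' * ↑u⁻¹)
      = algebraMap A C p' * c * algebraMap A C ↑u * algebraMap A C ↑u⁻¹ := by rw [map_mul, hx']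
    _ = algebraMap A C p' * c := by rw [mul_assoc _ (algebraMap A C _), ← map_mul, u.mul_inv,
        map_one, mul_one]

theorem stmt_1_general {A B C : Type*} [CommRing A] [IsDomain A] [UniqueFactorizationMonoid A]
    [CommRing B] [CommRing C] [IsDomain C]
    [Algebra A C] [Algebra B C]
    [Module.Flat A C]
    (hunits : ∀ a : A, IsUnit (algebraMap A C a) → IsUnit a) :
    ∀ x : C,
      ((∃ p q : A, q ≠ 0 ∧ x * algebraMap A C q = algebraMap A C p) ∧
        (∃ b : B, algebraMap B C b = x)) ↔
      ((∃ a : A, algebraMap A C a = x) ∧ (∃ b : B, algebraMap B C b = x)) := by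
  intro x
  constructor
  · rintro ⟨⟨p, q, hq, hx⟩, hb⟩
    exact ⟨exists_algebraMap_eq_of_mul_algebraMap_eq hunits hq hx, hb⟩
  · rintro ⟨⟨a, rfl⟩, hb⟩
    exact ⟨⟨a, 1, one_ne_zero, by rw [map_one, mul_one]⟩, hb⟩

/-- If `A, B` are domains inside a common domain `C`, `A` a UFD, `C` flat over `A`,
and `C* ∩ A ⊆ A*`, then `Q(A) ∩ B = A ∩ B` (inside the fraction field of `C`). -/
theorem stmt_1 {A B C : Type*} [CommRing A] [IsDomain A] [UniqueFactorizationMonoid A]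
    [CommRing B] [IsDomain B] [CommRing C] [IsDomain C]
    [Algebra A C] [Algebra B C]
    (hinjA : Function.Injective (algebraMap A C))
    (hinjB : Function.Injective (algebraMap B C))
    [Module.Flat A C]
    (hunits : ∀ a : A, IsUnit (algebraMap A C a) → IsUnit a) :
    ∀ x : C,
      ((∃ p q : A, q ≠ 0 ∧ x * algebraMap A C q = algebraMap A C p) ∧
        (∃ b : B, algebraMap B C b = x)) ↔
      ((∃ a : A, algebraMap A C a = x) ∧ (∃ b : B, algebraMap B C b = x)) :=
  stmt_1_general hunits
end

section
/- In the general Kuroda-type setup, if $\det T_{n-1} \neq 0$, then the elements $\pi_1, \pi_2, \ldots, \pi_{n-1}, X_n$ are algebraically independent over $K$. -/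
/-!
Choose a weight `W` on `ℤ^(n+1)` that ignores the last coordinate and is negative on every
row of `T`; this is possible because `det T ≠ 0`. Then the term of least weight of `π i` is
`-X^(T i, β i)`, and that of `Xₙ` is `Xₙ` itself. The least-weight term of a monomial
`∏ πᵢ^dᵢ · Xₙ^k` therefore has exponent `∑ dᵢ (T i, β i) + k eₙ`, which determines `(d, k)`
because these exponent vectors are linearly independent. In a nonzero polynomial relation,
the least-weight term of the monomial of least weight cannot cancel.
-/

open AddMonoidAlgebra Matrix

/-- The general Kuroda-type element
`π i = Xₙ^(γ i) − X₁^(T i 1) ⋯ X_{n-1}^(T i (n-1)) · Xₙ^(β i)`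
in the Laurent polynomial ring in `n + 1` variables, realized as the group algebra
`K[ℤ^(n+1)]`.  Here `T i` is the `i`-th row of the matrix `T_{n-1}` (whose diagonal
entries are `-α i i` and off-diagonal entries `α i j`), and `β i = α i n ≥ 0`. -/
noncomputable def kurodaPi (K : Type*) [Field K] (n : ℕ)
    (T : Matrix (Fin n) (Fin n) ℤ) (β γ : Fin n → ℤ) (i : Fin n) :
    AddMonoidAlgebra K (Fin (n + 1) → ℤ) :=
  AddMonoidAlgebra.single (Fin.snoc (0 : Fin n → ℤ) (γ i)) 1 -
    AddMonoidAlgebra.single (Fin.snoc (T i) (β i)) 1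

section InitialExponent

variable {R A B : Type*} [CommRing R] [AddCommMonoid A] [AddCommMonoid B] [LinearOrder B]
  (W : A →+ B)

def IsInitialExponent (f : AddMonoidAlgebra R A) (a : A) : Prop :=
  f.coeff a ≠ 0 ∧ ∀ x ∈ f.coeff.support, x ≠ a → W a < W x

variable {W}

lemma isInitialExponent_single {a : A} {r : R} (hr : r ≠ 0) :
    IsInitialExponent W (single a r) a := by
  refine ⟨by simpa [coeff_single] using hr, fun x hx hne => ?_⟩
  rw [coeff_single] at hx
  exact absurd (Finset.mem_singleton.mp (Finsupp.support_single_subset hx)) hne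

lemma isInitialExponent_one [Nontrivial R] : IsInitialExponent W (1 : AddMonoidAlgebra R A) 0 :=
  one_def (R := R) (M := A) ▸ isInitialExponent_single one_ne_zero

lemma isInitialExponent_single_sub_single {a b : A} (r : R) {s : R} (hs : s ≠ 0)
    (hab : W b < W a) : IsInitialExponent W (single a r - single b s) b := by
  classical
  have hne : a ≠ b := fun h => hab.ne (congrArg W h).symm
  refine ⟨by simpa [coeff_sub, coeff_single, Finsupp.single_apply, hne] using hs,
    fun x hx hxb => ?_⟩
  rw [coeff_sub, coeff_single, coeff_single] at hx
  rcases Finset.mem_union.mp (Finsupp.support_sub hx) with hx | hx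
  · rwa [Finset.mem_singleton.mp (Finsupp.support_single_subset hx)]
  · exact absurd (Finset.mem_singleton.mp (Finsupp.support_single_subset hx)) hxb

namespace IsInitialExponent

variable {f g : AddMonoidAlgebra R A} {a b : A}

lemma weight_le (hf : IsInitialExponent W f a) {x : A} (hx : x ∈ f.coeff.support) :
    W a ≤ W x := by
  rcases eq_or_ne x a with rfl | hne
  · exact le_rfl
  · exact (hf.2 x hx hne).le

lemma coeff_eq_zero_of_weight_le (hf : IsInitialExponent W f a) {x : A} (hx : W x ≤ W a)
    (hxa : x ≠ a) : f.coeff x = 0 :=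
  Finsupp.notMem_support_iff.mp fun hmem => (hf.2 x hmem hxa).not_ge hx

lemma sum_smul_ne_zero [NoZeroDivisors R] {ι : Type*} {s : Finset ι}
    (hs : s.Nonempty) {r : ι → R} (hr : ∀ i ∈ s, r i ≠ 0) {f : ι → AddMonoidAlgebra R A}
    {a : ι → A} (hf : ∀ i ∈ s, IsInitialExponent W (f i) (a i)) (ha : Set.InjOn a s) :
    ∑ i ∈ s, r i • f i ≠ 0 := by
  obtain ⟨i₀, hi₀, hmin⟩ := s.exists_min_image (fun i => W (a i)) hs
  have hcoeff : (∑ i ∈ s, r i • f i).coeff (a i₀) = r i₀ * (f i₀).coeff (a i₀) := by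
    rw [coeff_sum, Finsupp.finsetSum_apply, Finset.sum_eq_single_of_mem i₀ hi₀]
    · rw [coeff_smul_apply, smul_eq_mul]
    intro i hi hne
    rw [coeff_smul_apply, (hf i hi).coeff_eq_zero_of_weight_le (hmin i hi)
      (ha.ne hi₀ hi hne.symm), smul_zero]
  intro h
  rw [h, coeff_zero, Finsupp.zero_apply] at hcoeff
  exact mul_ne_zero (hr i₀ hi₀) (hf i₀ hi₀).1 hcoeff.symm

variable [IsOrderedCancelAddMonoid B]

lemma weight_add_lt (hf : IsInitialExponent W f a) (hg : IsInitialExponent W g b) {x y : A}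
    (hx : x ∈ f.coeff.support) (hy : y ∈ g.coeff.support) (hxy : x ≠ a ∨ y ≠ b) :
    W (a + b) < W (x + y) := by
  rw [map_add, map_add]
  rcases hxy with hxa | hyb
  · exact add_lt_add_of_lt_of_le (hf.2 x hx hxa) (hg.weight_le hy)
  · exact add_lt_add_of_le_of_lt (hf.weight_le hx) (hg.2 y hy hyb)

lemma uniqueAdd (hf : IsInitialExponent W f a) (hg : IsInitialExponent W g b) :
    UniqueAdd f.coeff.support g.coeff.support a b := by
  intro x y hx hy hxy
  by_contra hne
  exact (hf.weight_add_lt hg hx hy (not_and_or.mp hne)).ne (by rw [hxy])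

lemma mul [NoZeroDivisors R] (hf : IsInitialExponent W f a) (hg : IsInitialExponent W g b) :
    IsInitialExponent W (f * g) (a + b) := by
  classical
  refine ⟨?_, fun z hz hne => ?_⟩
  · rw [coeff_mul_add_of_uniqueAdd (hf.uniqueAdd hg)]
    exact mul_ne_zero hf.1 hg.1
  · obtain ⟨x, hx, y, hy, rfl⟩ := Finset.mem_add.mp (support_coeff_mul_subset f g hz)
    refine hf.weight_add_lt hg hx hy ?_
    by_contra! h
    exact hne (by rw [h.1, h.2])

lemma pow [IsDomain R] (hf : IsInitialExponent W f a) (k : ℕ) :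
    IsInitialExponent W (f ^ k) (k • a) := by
  induction k with
  | zero => simpa using isInitialExponent_one
  | succ k ih => simpa [pow_succ, succ_nsmul] using ih.mul hf

end IsInitialExponent

variable [IsOrderedCancelAddMonoid B]

lemma isInitialExponent_prod [IsDomain R] {ι : Type*} (s : Finset ι)
    {f : ι → AddMonoidAlgebra R A} {a : ι → A} (hf : ∀ i ∈ s, IsInitialExponent W (f i) (a i)) :
    IsInitialExponent W (∏ i ∈ s, f i) (∑ i ∈ s, a i) := by
  classical
  induction s using Finset.induction_on with
  | empty => simpa using isInitialExponent_one
  | insert i s hi ih =>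
    rw [Finset.prod_insert hi, Finset.sum_insert hi]
    exact (hf i (s.mem_insert_self i)).mul (ih fun j hj => hf j (Finset.mem_insert_of_mem hj))

theorem algebraicIndependent_of_isInitialExponent [IsDomain R] {ι : Type*}
    {f : ι → AddMonoidAlgebra R A} {e : ι → A} (hf : ∀ i, IsInitialExponent W (f i) (e i))
    (he : LinearIndependent ℕ e) : AlgebraicIndependent R f := by
  classical
  rw [algebraicIndependent_iff]
  intro p hp
  by_contra hp0
  have hmonomial : ∀ d : ι →₀ ℕ,
      IsInitialExponent W (∏ i ∈ d.support, f i ^ d i) (Finsupp.linearCombination ℕ e d) :=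
    fun d => isInitialExponent_prod d.support fun i _ => (hf i).pow (d i)
  refine IsInitialExponent.sum_smul_ne_zero (MvPolynomial.support_nonempty.mpr hp0)
    (fun d hd => MvPolynomial.mem_support_iff.mp hd) (fun d _ => hmonomial d) he.injOn ?_
  rw [MvPolynomial.aeval_def, MvPolynomial.eval₂_eq] at hp
  simpa only [Algebra.smul_def] using hp

end InitialExponent

lemma LinearIndependent.finSnoc_of_map_eq_zero {R M N : Type*} [Ring R] [AddCommGroup M]
    [AddCommGroup N] [Module R M] [Module R N] [NoZeroSMulDivisors R M] {n : ℕ} {v : Fin n → M}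
    {x : M} (P : M →ₗ[R] N) (hv : LinearIndependent R (P ∘ v)) (hx : x ≠ 0) (hPx : P x = 0) :
    LinearIndependent R (Fin.snoc v x : Fin (n + 1) → M) := by
  rw [Fintype.linearIndependent_iff] at hv ⊢
  intro g hg
  rw [Fin.sum_univ_castSucc] at hg
  simp only [Fin.snoc_castSucc, Fin.snoc_last] at hg
  have hinit : ∀ i : Fin n, g i.castSucc = 0 :=
    hv _ (by simpa [hPx] using congrArg P hg)
  have hlast : g (Fin.last n) = 0 :=
    (eq_zero_or_eq_zero_of_smul_eq_zero (by simpa [hinit] using hg)).resolve_right hx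
  intro i
  induction i using Fin.lastCases with
  | last => exact hlast
  | cast i => exact hinit i

lemma Matrix.exists_mulVec_neg_of_det_ne_zero {R m : Type*} [CommRing R] [LinearOrder R]
    [IsStrictOrderedRing R] [Fintype m] [DecidableEq m] {T : Matrix m m R} (hT : T.det ≠ 0) :
    ∃ w : m → R, ∀ i, (T *ᵥ w) i < 0 :=
  -- `T * adjugate T = det T • 1`, so `T *ᵥ w = -(det T)²` componentwise
  ⟨T.adjugate *ᵥ fun _ => -T.det, fun i => by
    simpa [mulVec_mulVec, mul_adjugate, smul_mulVec] using hT⟩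

lemma Matrix.linearIndependent_snoc_rows_of_det_ne_zero {R : Type*} [CommRing R] [IsDomain R]
    {n : ℕ} {T : Matrix (Fin n) (Fin n) R} (hT : T.det ≠ 0) (β : Fin n → R) :
    LinearIndependent R
      (Fin.snoc (fun i => Fin.snoc (T i) (β i)) (Fin.snoc 0 1) : Fin (n + 1) → Fin (n + 1) → R) := by
  refine .finSnoc_of_map_eq_zero (LinearMap.funLeft R R Fin.castSucc) ?_ ?_ ?_
  · have hrows : LinearMap.funLeft R R Fin.castSucc ∘ (fun i => Fin.snoc (T i) (β i)) =
        fun i => T i := by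
      ext i j
      simp [LinearMap.funLeft]
    rw [hrows]
    exact linearIndependent_rows_of_det_ne_zero hT
  · exact fun h => by simpa using congrFun h (Fin.last n)
  · ext j
    simp [LinearMap.funLeft]

theorem stmt_4_general (K : Type*) [Field K] (n : ℕ)
    (T : Matrix (Fin n) (Fin n) ℤ) (β γ : Fin n → ℤ)
    (hdet : T.det ≠ 0) :
    AlgebraicIndependent K
      (Fin.snoc (kurodaPi K n T β γ)
        (AddMonoidAlgebra.single (Fin.snoc 0 1 : Fin (n + 1) → ℤ) (1 : K))) := by
  obtain ⟨w, hw⟩ := Matrix.exists_mulVec_neg_of_det_ne_zero hdet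
  let W : (Fin (n + 1) → ℤ) →+ ℤ :=
    AddMonoidHom.mk' (fun x => (fun j => x j.castSucc) ⬝ᵥ w) fun x y => add_dotProduct _ _ _
  have hW : ∀ c t, W (Fin.snoc c t) = c ⬝ᵥ w := fun c t => by simp [W]
  refine algebraicIndependent_of_isInitialExponent (W := W) (fun i => ?_)
    ((Matrix.linearIndependent_snoc_rows_of_det_ne_zero hdet β).restrict_scalars' ℕ)
  induction i using Fin.lastCases with
  | last => simpa using isInitialExponent_single one_ne_zero
  | cast i =>
    simp only [Fin.snoc_castSucc]
    refine isInitialExponent_single_sub_single 1 one_ne_zero ?_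
    rw [hW, hW, zero_dotProduct]
    exact hw i

/-- If `det T_{n-1} ≠ 0` then `π₁, …, π_{n-1}, Xₙ` are algebraically independent over `K`. -/
theorem stmt_4 (K : Type*) [Field K] (n : ℕ)
    (T : Matrix (Fin n) (Fin n) ℤ) (β γ : Fin n → ℤ)
    (hγ : ∀ i, 1 ≤ γ i)
    (hdiag : ∀ i, T i i ≤ -1)
    (hoff : ∀ i j, i ≠ j → 1 ≤ T i j)
    (hβ : ∀ i, 0 ≤ β i)
    (hdet : T.det ≠ 0) :
    AlgebraicIndependent K
      (Fin.snoc (kurodaPi K n T β γ)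
        (AddMonoidAlgebra.single (Fin.snoc 0 1 : Fin (n + 1) → ℤ) (1 : K))) :=
  stmt_4_general K n T β γ hdet
end

section
/- In the general Kuroda-type setup, if $\det T_{n-1} \neq 0$, then $K(\pi) \cap K[X_1^{\pm 1}, \ldots, X_n^{\pm 1}] = K[\pi]$, where $K(\pi)$ is the field of fractions of $K[\pi] = K[\pi_1, \ldots, \pi_{n-1}]$; that is, every Laurent polynomial expressible as a fraction of two elements of $K[\pi_1, \ldots, \pi_{n-1}]$ already lies in $K[\pi_1, \ldots, \pi_{n-1}]$. -/
open MvPolynomial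

section Nullstellensatz

variable {K L σ : Type*} [Field K] [Field L] [Algebra K L] [IsAlgClosed L] [Finite σ]

theorem MvPolynomial.exists_aeval_eq_zero_ne_zero_of_not_dvd {q P : MvPolynomial σ K}
    (hq : Irreducible q) (hqP : ¬q ∣ P) : ∃ c : σ → L, aeval c q = 0 ∧ aeval c P ≠ 0 := by
  have : (Ideal.span {q}).IsPrime := (Ideal.span_singleton_prime hq.ne_zero).2 hq.prime
  by_contra! h
  refine hqP (Ideal.mem_span_singleton.1 ?_)
  rw [← IsPrime.vanishingIdeal_zeroLocus (Ideal.span {q}) (K := L), mem_vanishingIdeal_iff]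
  exact fun c hc => h c (mem_zeroLocus_iff.1 hc q (Ideal.mem_span_singleton_self q))

theorem MvPolynomial.mem_adjoin_range_of_mul_aeval_eq {A : Type*} [CommRing A] [IsDomain A]
    [Algebra K A] {π : σ → A} (hπ : ∀ c : σ → L, ∃ φ : A →ₐ[K] L, ∀ i, φ (π i) = c i)
    {x : A} {P Q : MvPolynomial σ K} (hQ : aeval π Q ≠ 0)
    (h : x * aeval π Q = aeval π P) : x ∈ Algebra.adjoin K (Set.range π) := by
  rw [Algebra.adjoin_range_eq_range_aeval]
  induction Q using WfDvdMonoid.induction_on_irreducible generalizing P with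
  | zero => simp at hQ
  | unit u hu =>
    obtain ⟨u, rfl⟩ := hu
    refine ⟨P * ↑u⁻¹, ?_⟩
    change aeval π (P * (↑u⁻¹ : MvPolynomial σ K)) = x
    rw [map_mul, ← h, mul_assoc, ← map_mul, Units.mul_inv, map_one, mul_one]
  | mul Q q hQ0 hq ih =>
    have hqP : q ∣ P := by
      by_contra hqP
      obtain ⟨c, hc, hPc⟩ := exists_aeval_eq_zero_ne_zero_of_not_dvd (L := L) hq hqP
      obtain ⟨φ, hφ⟩ := hπ c
      have hφπ : ∀ F, φ (aeval π F) = aeval c F := fun F => by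
        rw [← AlgHom.comp_apply, comp_aeval]; simp only [hφ]
      apply hPc
      rw [← hφπ, ← h, map_mul, hφπ, map_mul, hc, zero_mul, mul_zero]
    obtain ⟨P, rfl⟩ := hqP
    simp only [map_mul] at hQ h
    exact ih (P := P) (right_ne_zero_of_mul hQ)
      (mul_left_cancel₀ (left_ne_zero_of_mul hQ) (by linear_combination h))

end Nullstellensatz

theorem Matrix.exists_sum_zsmul_eq {ι M : Type*} [Fintype ι] [DecidableEq ι] [AddCommGroup M]
    (T : Matrix ι ι ℤ) (hdiv : ∀ a : M, ∃ w : M, T.det • w = a) (e : ι → M) :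
    ∃ u : ι → M, ∀ i, ∑ k, T i k • u k = e i := by
  choose w hw using fun i => hdiv (e i)
  refine ⟨fun k => ∑ j, T.adjugate k j • w j, fun i => ?_⟩
  simp only [Finset.smul_sum, smul_smul]
  rw [Finset.sum_comm]
  simp only [← Finset.sum_smul, ← Matrix.mul_apply, Matrix.mul_adjugate, Matrix.smul_apply,
    Matrix.one_apply, smul_eq_mul, mul_ite, mul_one, mul_zero, ite_smul, zero_smul,
    Finset.sum_ite_eq, Finset.mem_univ, if_true, hw]

theorem Matrix.exists_prod_zpow_eq {ι G : Type*} [Fintype ι] [DecidableEq ι] [CommGroup G]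
    (T : Matrix ι ι ℤ) (hroot : ∀ a : G, ∃ w : G, w ^ T.det = a) (e : ι → G) :
    ∃ u : ι → G, ∀ i, ∏ k, u k ^ T i k = e i :=
  T.exists_sum_zsmul_eq (M := Additive G) hroot e

theorem IsAlgClosed.exists_zpow_eq {L : Type*} [Field L] [IsAlgClosed L] {d : ℤ} (hd : d ≠ 0)
    (a : Lˣ) : ∃ w : Lˣ, w ^ d = a := by
  obtain ⟨z, hz⟩ := IsAlgClosed.exists_pow_nat_eq (a : L) (Int.natAbs_pos.2 hd)
  have hz0 : z ≠ 0 := by rintro rfl; exact a.ne_zero (by simpa [hd] using hz.symm)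
  have hw : Units.mk0 z hz0 ^ d.natAbs = a := Units.ext (by simpa using hz)
  rcases Int.natAbs_eq d with h | h
  · exact ⟨Units.mk0 z hz0, by rw [h, zpow_natCast, hw]⟩
  · exact ⟨(Units.mk0 z hz0)⁻¹, by rw [h, inv_zpow', neg_neg, zpow_natCast, hw]⟩

theorem exists_ne_zero_forall_pow_ne {L ι : Type*} [Field L] [Infinite L] [Fintype ι]
    (d : ι → ℕ) (hd : ∀ i, d i ≠ 0) (c : ι → L) : ∃ t : L, t ≠ 0 ∧ ∀ i, t ^ d i ≠ c i := by
  classical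
  obtain ⟨t, ht⟩ := Infinite.exists_notMem_finset
    (insert 0 (Finset.univ.biUnion fun i => (Polynomial.nthRoots (d i) (c i)).toFinset))
  simp only [Finset.mem_insert, Finset.mem_biUnion, Finset.mem_univ, true_and,
    Multiset.mem_toFinset, Polynomial.mem_nthRoots (Nat.pos_of_ne_zero (hd _)), not_or,
    not_exists] at ht
  exact ⟨t, ht⟩

section Torus

variable (K : Type*) {L : Type*} [Field K] [Field L] [Algebra K L] {m : ℕ}

noncomputable def torusChar (ξ : Fin m → Lˣ) : Multiplicative (Fin m → ℤ) →* Lˣ where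
  toFun v := ∏ j, ξ j ^ v.toAdd j
  map_one' := by simp
  map_mul' v w := by simp [zpow_add, Finset.prod_mul_distrib]

noncomputable def torusEval (ξ : Fin m → Lˣ) : AddMonoidAlgebra K (Fin m → ℤ) →ₐ[K] L :=
  AddMonoidAlgebra.lift K L (Fin m → ℤ) ((Units.coeHom L).comp (torusChar ξ))

variable {K}

theorem torusEval_single_one (ξ : Fin m → Lˣ) (v : Fin m → ℤ) :
    torusEval K ξ (AddMonoidAlgebra.single v 1) = ((∏ j, ξ j ^ v j : Lˣ) : L) := by
  simp [torusEval, torusChar]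

theorem torusEval_single_snoc_one (ξ : Fin m → Lˣ) (τ : Lˣ) (v : Fin m → ℤ) (z : ℤ) :
    torusEval K (Fin.snoc ξ τ) (AddMonoidAlgebra.single (Fin.snoc v z) 1) =
      ((∏ j, ξ j ^ v j) * τ ^ z : Lˣ) := by
  simp [torusEval_single_one, Fin.prod_univ_castSucc]

end Torus

theorem exists_algHom_kurodaPi_eq {K L : Type*} [Field K] [Field L] [Algebra K L] [IsAlgClosed L]
    {n : ℕ} (T : Matrix (Fin n) (Fin n) ℤ) (β γ : Fin n → ℤ) (hγ : ∀ i, 1 ≤ γ i)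
    (hdet : T.det ≠ 0) (c : Fin n → L) :
    ∃ φ : AddMonoidAlgebra K (Fin (n + 1) → ℤ) →ₐ[K] L, ∀ i, φ (kurodaPi K n T β γ i) = c i := by
  lift γ to Fin n → ℕ using fun i => by linarith [hγ i]
  obtain ⟨t, ht0, ht⟩ := exists_ne_zero_forall_pow_ne γ
    (fun i => Nat.one_le_iff_ne_zero.1 (Nat.one_le_cast.1 (hγ i))) c
  set τ := Units.mk0 t ht0
  obtain ⟨u, hu⟩ := T.exists_prod_zpow_eq (IsAlgClosed.exists_zpow_eq hdet)
    fun i => Units.mk0 (t ^ γ i - c i) (sub_ne_zero.2 (ht i)) * τ ^ (-β i)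
  -- at `(u, τ)`, `π i = t ^ γ i - (t ^ γ i - c i) * τ ^ (-β i) * τ ^ β i = c i`
  refine ⟨torusEval K (Fin.snoc u τ), fun i => ?_⟩
  rw [kurodaPi, map_sub, torusEval_single_snoc_one, torusEval_single_snoc_one, hu, mul_assoc,
    ← zpow_add, neg_add_cancel, zpow_zero, mul_one]
  simp [τ]

theorem stmt_7_general (K : Type*) [Field K] (n : ℕ)
    (T : Matrix (Fin n) (Fin n) ℤ) (β γ : Fin n → ℤ)
    (hγ : ∀ i, 1 ≤ γ i)
    (hdet : T.det ≠ 0) :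
    ∀ x : AddMonoidAlgebra K (Fin (n + 1) → ℤ),
      (∃ p q : Algebra.adjoin K (Set.range (kurodaPi K n T β γ)), q ≠ 0 ∧
          x * (q : AddMonoidAlgebra K (Fin (n + 1) → ℤ)) = p) ↔
        x ∈ Algebra.adjoin K (Set.range (kurodaPi K n T β γ)) := by
  intro x
  constructor
  · rintro ⟨⟨p, hp⟩, ⟨q, hq⟩, hq0, h⟩
    rw [Algebra.adjoin_range_eq_range_aeval] at hp hq
    obtain ⟨P, rfl⟩ := hp
    obtain ⟨Q, rfl⟩ := hq
    exact mem_adjoin_range_of_mul_aeval_eq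
      (exists_algHom_kurodaPi_eq (L := AlgebraicClosure K) T β γ hγ hdet)
      (fun h0 => hq0 (Subtype.ext h0)) h
  · intro hx
    exact ⟨⟨x, hx⟩, 1, one_ne_zero, mul_one x⟩

/-- If `det T_{n-1} ≠ 0` then `K(π) ∩ K[X₁^±1, …, Xₙ^±1] = K[π]`:
a Laurent polynomial is a fraction of two elements of `K[π]` iff it lies in `K[π]`. -/
theorem stmt_7 (K : Type*) [Field K] (n : ℕ)
    (T : Matrix (Fin n) (Fin n) ℤ) (β γ : Fin n → ℤ)
    (hγ : ∀ i, 1 ≤ γ i)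
    (hdiag : ∀ i, T i i ≤ -1)
    (hoff : ∀ i j, i ≠ j → 1 ≤ T i j)
    (hβ : ∀ i, 0 ≤ β i)
    (hdet : T.det ≠ 0) :
    ∀ x : AddMonoidAlgebra K (Fin (n + 1) → ℤ),
      (∃ p q : Algebra.adjoin K (Set.range (kurodaPi K n T β γ)), q ≠ 0 ∧
          x * (q : AddMonoidAlgebra K (Fin (n + 1) → ℤ)) = p) ↔
        x ∈ Algebra.adjoin K (Set.range (kurodaPi K n T β γ)) :=
  stmt_7_general K n T β γ hγ hdet
end

section
/- In the general Kuroda-type setup, if $\det T_{n-1} \neq 0$, then $K(\pi) \cap K[X_1, \ldots, X_n] = K[\pi] \cap K[X_1, \ldots, X_n]$, where $K(\pi)$ is the field of fractions of $K[\pi] = K[\pi_1, \ldots, \pi_{n-1}]$ and $K[X_1, \ldots, X_n]$ is the polynomial subring of the Laurent polynomial ring. -/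
/-!
Put `Z = Xₙ`. The map `θ : K[Z, Y₁, …, Y_{n-1}] → K[X^{±1}]`, `Z ↦ Xₙ`, `Yᵢ ↦ πᵢ`, is the monomial
map `Z ↦ Xₙ`, `Yᵢ ↦ X^{bᵢ}` (where `πᵢ = Xₙ^{γᵢ} - X^{bᵢ}`) precomposed with the involution
`Yᵢ ↦ Z^{γᵢ} - Yᵢ`; since `det T ≠ 0` the exponents `eₙ, b₁, …` are independent, so `θ` is
injective. Inverting `Z` and the `Z^{γᵢ} - Yᵢ` produces every monomial of the lattice spanned by
these exponents, which has finite index in `ℤⁿ`, so the whole Laurent ring is integral over this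
localisation. If `x θ(Q) = θ(P)` with `P, Q ∈ K[Y]` coprime, clearing denominators in an integral
equation for `x` gives `Q ∣ s Pᵐ` where `s`, a product of `Z` and the `Z^{γᵢ} - Yᵢ`, is monic in
`Z`. Hence `Q` is a unit and `x ∈ K[π]`.
-/

open AddMonoidAlgebra MvPolynomial Matrix

namespace AddMonoidAlgebra

variable {R G : Type*}

theorem isIntegral_of_forall_nsmul_mem [CommRing R] [AddCommMonoid G] (D : Subalgebra R R[G])
    (hD : ∀ g : G, ∃ N ≠ 0, single (N • g) (1 : R) ∈ D) (x : R[G]) : IsIntegral D x := by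
  have hsingle (g : G) : IsIntegral D (single g (1 : R)) := by
    obtain ⟨N, hN, hmem⟩ := hD g
    refine IsIntegral.of_pow (Nat.pos_of_ne_zero hN) ?_
    rw [single_pow, one_pow]
    exact isIntegral_algebraMap (x := (⟨_, hmem⟩ : D))
  induction x using induction_linear with
  | zero => exact isIntegral_zero
  | add x y hx hy => exact hx.add hy
  | single g r =>
    rw [← mul_one r, ← smul_eq_mul, ← smul_single]
    exact (hsingle g).smul r

theorem single_one_mem_of_mem_closure [CommSemiring R] [AddCommGroup G] (D : Subalgebra R R[G])
    {s : Set G} (hs : ∀ g ∈ s, single g (1 : R) ∈ D ∧ single (-g) (1 : R) ∈ D) {g : G}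
    (hg : g ∈ AddSubgroup.closure s) : single g (1 : R) ∈ D ∧ single (-g) (1 : R) ∈ D := by
  induction hg using AddSubgroup.closure_induction with
  | mem g hg => exact hs g hg
  | zero => simp [← one_def, D.one_mem]
  | add g h _ _ hg hh =>
    rw [neg_add, ← one_mul (1 : R), ← single_mul_single, ← single_mul_single]
    exact ⟨mul_mem hg.1 hh.1, mul_mem hg.2 hh.2⟩
  | neg g _ hg => rw [neg_neg]; exact hg.symm

theorem single_mul_single_neg_one [Semiring R] [AddGroup G] (g : G) :
    single g (1 : R) * single (-g) 1 = 1 := by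
  rw [single_mul_single, add_neg_cancel, one_mul, one_def]

end AddMonoidAlgebra

theorem Matrix.det_smul_mem_closure_range {ι : Type*} [Fintype ι] [DecidableEq ι]
    (M : Matrix ι ι ℤ) (v : ι → ℤ) : M.det • v ∈ AddSubgroup.closure (Set.range M) := by
  have hv : M.det • v = ∑ k, (v ᵥ* M.adjugate) k • M k := by
    rw [← Matrix.vecMul_eq_sum, Matrix.vecMul_vecMul, Matrix.adjugate_mul, Matrix.vecMul_smul,
      Matrix.vecMul_one]
  rw [hv]
  exact AddSubgroup.sum_mem _ fun k _ ↦
    AddSubgroup.zsmul_mem _ (AddSubgroup.subset_closure (Set.mem_range_self k)) _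

theorem AddMonoidAlgebra.isIntegral_of_det_ne_zero {R ι : Type*} [CommRing R] [Fintype ι]
    [DecidableEq ι] {M : Matrix ι ι ℤ} (hM : M.det ≠ 0) (D : Subalgebra R R[ι → ℤ])
    (hD : ∀ k, single (M k) (1 : R) ∈ D ∧ single (-M k) (1 : R) ∈ D) (x : R[ι → ℤ]) :
    IsIntegral D x := by
  refine isIntegral_of_forall_nsmul_mem D (fun g ↦ ⟨M.det.natAbs, by simpa using hM, ?_⟩) x
  have hmem := single_one_mem_of_mem_closure D (by rintro _ ⟨k, rfl⟩; exact hD k)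
    (M.det_smul_mem_closure_range g)
  rcases Int.natAbs_eq M.det with h | h
  · rw [← natCast_zsmul, ← h]; exact hmem.1
  · rw [← natCast_zsmul, ← neg_neg (M.det.natAbs : ℤ), ← h, neg_smul]; exact hmem.2

theorem MvPolynomial.aeval_single_injective {R G σ : Type*} [CommSemiring R] [AddCommMonoid G]
    {v : σ → G} (hv : LinearIndependent ℕ v) :
    Function.Injective (aeval (fun j ↦ single (v j) (1 : R)) : MvPolynomial σ R →ₐ[R] R[G]) := by
  have h : aeval (fun j ↦ single (v j) (1 : R)) =
      mapDomainAlgHom R R (Finsupp.linearCombination ℕ v).toAddMonoidHom := by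
    refine MvPolynomial.algHom_ext fun j ↦ ?_
    rw [aeval_X, mapDomainAlgHom_apply, MvPolynomial.X, ← MvPolynomial.single_eq_monomial]
    simp
  rw [h]
  exact mapDomain_injective hv

namespace AlgHom

variable {K R L : Type*} [CommRing K] [CommRing R] [CommRing L] [Algebra K R] [Algebra K L]

def fracRange (θ : R →ₐ[K] L) (S : Submonoid R) : Subalgebra K L where
  carrier := {y | ∃ s ∈ S, ∃ h, y * θ s = θ h}
  mul_mem' := by
    rintro y z ⟨s, hs, h, hy⟩ ⟨t, ht, k, hz⟩
    exact ⟨s * t, mul_mem hs ht, h * k, by rw [map_mul, map_mul, ← hy, ← hz]; ring⟩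
  add_mem' := by
    rintro y z ⟨s, hs, h, hy⟩ ⟨t, ht, k, hz⟩
    exact ⟨s * t, mul_mem hs ht, h * t + s * k, by
      rw [map_mul, map_add, map_mul, map_mul, ← hy, ← hz]; ring⟩
  algebraMap_mem' r := ⟨1, one_mem S, algebraMap K R r, by simp⟩

variable (θ : R →ₐ[K] L) {S : Submonoid R}

theorem mem_fracRange_of_mul_eq {y : L} {s : R} (hs : s ∈ S) (h : R) (hy : y * θ s = θ h) :
    y ∈ θ.fracRange S :=
  ⟨s, hs, h, hy⟩

theorem exists_map_eq_C_mul (F : Polynomial (θ.fracRange S)) :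
    ∃ s ∈ S, ∃ G : Polynomial R,
      G.map (θ : R →+* L) = Polynomial.C (θ s) * F.map (algebraMap (θ.fracRange S) L) := by
  induction F using Polynomial.induction_on' with
  | add F₁ F₂ h₁ h₂ =>
    obtain ⟨s₁, hs₁, G₁, hG₁⟩ := h₁
    obtain ⟨s₂, hs₂, G₂, hG₂⟩ := h₂
    refine ⟨s₁ * s₂, mul_mem hs₁ hs₂, Polynomial.C s₂ * G₁ + Polynomial.C s₁ * G₂, ?_⟩
    simp only [Polynomial.map_add, Polynomial.map_mul, Polynomial.map_C, hG₁, hG₂, map_mul,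
      RingHom.coe_coe]
    ring
  | monomial k y =>
    obtain ⟨s, hs, h, hy⟩ := y.2
    refine ⟨s, hs, Polynomial.monomial k h, ?_⟩
    simp only [Polynomial.map_monomial, Polynomial.C_mul_monomial, RingHom.coe_coe]
    rw [← hy, mul_comm]
    rfl

/-- The rational root theorem in disguise: after clearing denominators, an integral equation for
`x = θ p / θ q` becomes, once its roots are scaled by `q`, a polynomial over `R` with root `p`. -/
theorem dvd_mul_pow_of_isIntegral (hθ : Function.Injective θ) (hS : ∀ s ∈ S, IsUnit (θ s))
    {x : L} (hx : IsIntegral (θ.fracRange S) x) {p q : R} (hpq : x * θ q = θ p) :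
    ∃ s ∈ S, ∃ m : ℕ, q ∣ s * p ^ m := by
  obtain ⟨F, hF, hFx⟩ := hx
  obtain ⟨s, hs, G, hG⟩ := θ.exists_map_eq_C_mul F
  have hθ' : Function.Injective (θ : R →+* L) := hθ
  have hlead : G.leadingCoeff = s := hθ <| by
    rw [← RingHom.coe_coe θ, ← Polynomial.leadingCoeff_map_of_injective hθ', hG,
      Polynomial.leadingCoeff_C_mul_of_isUnit (hS s hs), (hF.map _).leadingCoeff, mul_one,
      RingHom.coe_coe]
  have hroot : (G.scaleRoots q).IsRoot p := hθ <| by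
    rw [map_zero, ← RingHom.coe_coe θ, ← Polynomial.eval₂_at_apply, RingHom.coe_coe, ← hpq,
      mul_comm, ← RingHom.coe_coe θ,
      Polynomial.scaleRoots_eval₂_mul, ← Polynomial.eval_map, hG, Polynomial.eval_mul,
      Polynomial.eval_map, hFx, mul_zero, mul_zero]
  refine ⟨s, hs, G.natDegree, ?_⟩
  have key := Polynomial.dvd_term_of_isRoot_of_dvd_terms G.natDegree hroot fun j hj ↦ by
    rw [Polynomial.coeff_scaleRoots]
    rcases hj.lt_or_gt with hj | hj
    · exact (dvd_pow_self q (by omega)).mul_left _ |>.mul_right _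
    · simp [Polynomial.coeff_eq_zero_of_natDegree_lt hj]
  simpa [Polynomial.coeff_scaleRoots, hlead] using key

end AlgHom

theorem Polynomial.isUnit_of_C_dvd_monic_mul_C {R : Type*} [CommSemiring R] {a b : R}
    (hab : IsRelPrime a b) {f : Polynomial R} (hf : f.Monic) (h : C a ∣ f * C b) : IsUnit a :=
  hab dvd_rfl <| by
    simpa [coeff_mul_C, hf.coeff_natDegree] using (C_dvd_iff_dvd_coeff a _).1 h f.natDegree

theorem MvPolynomial.finSuccEquiv_rename_succ {R : Type*} [CommSemiring R] {n : ℕ}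
    (p : MvPolynomial (Fin n) R) : finSuccEquiv R n (rename Fin.succ p) = Polynomial.C p := by
  have h : ((finSuccEquiv R n).toAlgHom.comp (rename Fin.succ) : MvPolynomial (Fin n) R →ₐ[R] _) =
      Polynomial.CAlgHom := MvPolynomial.algHom_ext fun j ↦ by simp [finSuccEquiv_X_succ]
  exact DFunLike.congr_fun h p

theorem Fin.snoc_zero_eq_toNat_nsmul {n : ℕ} {c : ℤ} (hc : 0 ≤ c) :
    (Fin.snoc 0 c : Fin (n + 1) → ℤ) = c.toNat • Pi.single (Fin.last n) 1 := by
  ext j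
  induction j using Fin.lastCases <;> simp [hc, Fin.castSucc_ne_last]

namespace Kuroda

variable {K : Type*} [Field K] {n : ℕ} (T : Matrix (Fin n) (Fin n) ℤ) (β γ : Fin n → ℤ)

def exponentMatrix : Matrix (Fin (n + 1)) (Fin (n + 1)) ℤ :=
  Matrix.of (Fin.cons (Pi.single (Fin.last n) 1) fun i ↦ Fin.snoc (T i) (β i))

@[simp]
theorem exponentMatrix_zero : exponentMatrix T β 0 = Pi.single (Fin.last n) 1 := rfl

@[simp]
theorem exponentMatrix_succ (i : Fin n) : exponentMatrix T β i.succ = Fin.snoc (T i) (β i) := rfl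

theorem det_exponentMatrix : (exponentMatrix T β).det = (-1) ^ n * T.det := by
  have hT : (exponentMatrix T β).submatrix Fin.succ Fin.castSucc = T := by
    ext i j
    simp
  rw [Matrix.det_succ_row_zero, Fin.sum_univ_castSucc]
  simp [Fin.succAbove_last, Fin.castSucc_ne_last, hT]

noncomputable def kurodaMap :
    MvPolynomial (Fin (n + 1)) K →ₐ[K] AddMonoidAlgebra K (Fin (n + 1) → ℤ) :=
  aeval (Fin.cons (single (Pi.single (Fin.last n) 1) 1) (kurodaPi K n T β γ))

noncomputable def shear : MvPolynomial (Fin (n + 1)) K →ₐ[K] MvPolynomial (Fin (n + 1)) K :=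
  aeval (Fin.cons (X 0) fun i ↦ X 0 ^ (γ i).toNat - X i.succ)

theorem shear_comp_shear :
    (shear γ).comp (shear γ) = AlgHom.id K (MvPolynomial (Fin (n + 1)) K) :=
  MvPolynomial.algHom_ext fun k ↦ by
    induction k using Fin.cases <;> simp [shear]

theorem kurodaMap_eq_comp_shear (hγ : ∀ i, 0 ≤ γ i) :
    kurodaMap T β γ = (aeval fun k ↦ single (exponentMatrix T β k) (1 : K)).comp (shear γ) :=
  MvPolynomial.algHom_ext fun k ↦ by
    induction k using Fin.cases with
    | zero => simp [kurodaMap, shear]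
    | succ i =>
      simp [kurodaMap, shear, kurodaPi, single_pow, Fin.snoc_zero_eq_toNat_nsmul (hγ i)]

variable {T β γ}

variable (β) in
theorem exponentMatrix_det_ne_zero (hdet : T.det ≠ 0) : (exponentMatrix T β).det ≠ 0 := by
  simp [det_exponentMatrix, hdet]

theorem shear_injective : Function.Injective (shear γ (K := K)) :=
  Function.LeftInverse.injective (g := shear γ) fun p ↦ by
    rw [← AlgHom.comp_apply, shear_comp_shear, AlgHom.id_apply]

theorem kurodaMap_injective (hγ : ∀ i, 0 ≤ γ i) (hdet : T.det ≠ 0) :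
    Function.Injective (kurodaMap T β γ (K := K)) := by
  have hrows : LinearIndependent ℕ (exponentMatrix T β) :=
    (linearIndependent_rows_of_det_ne_zero (exponentMatrix_det_ne_zero β hdet)).restrict_scalars' ℕ
  rw [kurodaMap_eq_comp_shear T β γ hγ, AlgHom.coe_comp]
  exact (aeval_single_injective hrows).comp shear_injective

theorem kurodaMap_shear_X (hγ : ∀ i, 0 ≤ γ i) (k : Fin (n + 1)) :
    kurodaMap T β γ (shear γ (X k)) = single (exponentMatrix T β k) (1 : K) := by
  rw [kurodaMap_eq_comp_shear T β γ hγ, AlgHom.comp_apply, ← AlgHom.comp_apply (shear γ),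
    shear_comp_shear, AlgHom.id_apply, aeval_X]

variable (T β γ) in
/-- Monicity in `X 0` makes these denominators coprime to every nonunit of `K[X 1, …, X n]`. -/
noncomputable def denominators : Submonoid (MvPolynomial (Fin (n + 1)) K) where
  carrier := {s | IsUnit (kurodaMap T β γ s) ∧ (finSuccEquiv K n s).Monic}
  mul_mem' := by
    rintro s t ⟨hs, hs'⟩ ⟨ht, ht'⟩
    exact ⟨by rw [map_mul]; exact hs.mul ht, by rw [map_mul]; exact hs'.mul ht'⟩
  one_mem' := by simp

theorem mem_denominators {s : MvPolynomial (Fin (n + 1)) K} :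
    s ∈ denominators T β γ ↔
      IsUnit (kurodaMap T β γ s) ∧ (finSuccEquiv K n s).Monic :=
  Iff.rfl

theorem shear_X_mem_denominators (hγ : ∀ i, 1 ≤ γ i) (k : Fin (n + 1)) :
    shear γ (X k) ∈ denominators T β γ (K := K) := by
  refine mem_denominators.2 ⟨?_, ?_⟩
  · rw [kurodaMap_shear_X fun i ↦ by linarith [hγ i]]
    exact IsUnit.of_mul_eq_one _ (single_mul_single_neg_one _)
  · induction k using Fin.cases with
    | zero => simp [shear, finSuccEquiv_X_zero, Polynomial.monic_X]
    | succ i =>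
      have hshear : shear γ (X i.succ : MvPolynomial (Fin (n + 1)) K) =
          X 0 ^ (γ i).toNat - X i.succ := by
        simp [shear]
      rw [hshear, map_sub, map_pow, finSuccEquiv_X_zero, finSuccEquiv_X_succ]
      exact Polynomial.monic_X_pow_sub_C _ (by have := hγ i; omega)

theorem isIntegral_fracRange_denominators (hγ : ∀ i, 1 ≤ γ i) (hdet : T.det ≠ 0)
    (x : AddMonoidAlgebra K (Fin (n + 1) → ℤ)) :
    IsIntegral ((kurodaMap T β γ (K := K)).fracRange (denominators T β γ)) x := by
  have hγ₀ (i : Fin n) : 0 ≤ γ i := by linarith [hγ i]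
  refine isIntegral_of_det_ne_zero (exponentMatrix_det_ne_zero β hdet) _ (fun k ↦ ⟨?_, ?_⟩) x
  · exact (kurodaMap T β γ).mem_fracRange_of_mul_eq (one_mem _) (shear γ (X k))
      (by rw [map_one, mul_one, kurodaMap_shear_X hγ₀])
  · exact (kurodaMap T β γ).mem_fracRange_of_mul_eq (shear_X_mem_denominators hγ k) 1
      (by rw [kurodaMap_shear_X hγ₀, mul_comm, single_mul_single_neg_one, map_one])

theorem aeval_kurodaPi_eq_kurodaMap_rename (Q : MvPolynomial (Fin n) K) :
    aeval (kurodaPi K n T β γ) Q = kurodaMap T β γ (rename Fin.succ Q) := by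
  rw [kurodaMap, aeval_rename, Fin.cons_comp_succ]

theorem mem_range_of_mul_aeval_eq (hγ : ∀ i, 1 ≤ γ i) (hdet : T.det ≠ 0)
    {x : AddMonoidAlgebra K (Fin (n + 1) → ℤ)} {P Q : MvPolynomial (Fin n) K}
    (hQ : aeval (kurodaPi K n T β γ) Q ≠ 0)
    (hx : x * aeval (kurodaPi K n T β γ) Q = aeval (kurodaPi K n T β γ) P) :
    x ∈ (aeval (R := K) (kurodaPi K n T β γ)).range := by
  set ev : MvPolynomial (Fin n) K →ₐ[K] AddMonoidAlgebra K (Fin (n + 1) → ℤ) :=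
    aeval (kurodaPi K n T β γ)
  have hQ₀ : Q ≠ 0 := by rintro rfl; simp at hQ
  obtain ⟨P', Q', c, hrel, rfl, rfl⟩ := UniqueFactorizationMonoid.exists_reduced_factors' P Q hQ₀
  rw [map_mul] at hQ hx
  have hx' : x * ev Q' = ev P' :=
    mul_left_cancel₀ (left_ne_zero_of_mul hQ) (by rw [map_mul] at hx; linear_combination hx)
  obtain ⟨s, hs, m, hdvd⟩ := (kurodaMap T β γ).dvd_mul_pow_of_isIntegral
    (kurodaMap_injective (fun i ↦ by linarith [hγ i]) hdet) (fun s hs ↦ (mem_denominators.1 hs).1)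
    (isIntegral_fracRange_denominators hγ hdet x) (p := rename Fin.succ P')
    (q := rename Fin.succ Q')
    (by rw [← aeval_kurodaPi_eq_kurodaMap_rename, ← aeval_kurodaPi_eq_kurodaMap_rename]; exact hx')
  have hunit : IsUnit Q' := by
    refine Polynomial.isUnit_of_C_dvd_monic_mul_C (hrel.symm.pow_right (n := m))
      (mem_denominators.1 hs).2 ?_
    simpa [finSuccEquiv_rename_succ] using map_dvd (finSuccEquiv K n) hdvd
  refine ⟨P' * ↑hunit.unit⁻¹, ?_⟩
  change ev _ = x
  rw [map_mul, ← hx', mul_assoc, ← map_mul, IsUnit.mul_val_inv, map_one, mul_one]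

end Kuroda

theorem stmt_8_general (K : Type*) [Field K] (n : ℕ)
    (T : Matrix (Fin n) (Fin n) ℤ) (β γ : Fin n → ℤ)
    (hγ : ∀ i, 1 ≤ γ i)
    (hdet : T.det ≠ 0) :
    ∀ x : AddMonoidAlgebra K (Fin (n + 1) → ℤ),
      x ∈ Algebra.adjoin K
        (Set.range fun j : Fin (n + 1) =>
          AddMonoidAlgebra.single (Pi.single j 1 : Fin (n + 1) → ℤ) (1 : K)) →
      ((∃ p q : Algebra.adjoin K (Set.range (kurodaPi K n T β γ)), q ≠ 0 ∧
          x * (q : AddMonoidAlgebra K (Fin (n + 1) → ℤ)) = p) ↔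
        x ∈ Algebra.adjoin K (Set.range (kurodaPi K n T β γ))) := by
  intro x _
  rw [Algebra.adjoin_range_eq_range_aeval]
  constructor
  · rintro ⟨⟨_, P, rfl⟩, ⟨_, Q, rfl⟩, hQ, hx⟩
    exact Kuroda.mem_range_of_mul_aeval_eq hγ hdet (fun h ↦ hQ (Subtype.ext h)) hx
  · intro hx
    exact ⟨⟨x, hx⟩, 1, one_ne_zero, mul_one x⟩

/-- If `det T_{n-1} ≠ 0` then `K(π) ∩ K[X₁, …, Xₙ] = K[π] ∩ K[X₁, …, Xₙ]`:
a polynomial (element of the polynomial subring of the Laurent polynomial ring)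
is a fraction of two elements of `K[π]` iff it lies in `K[π]`. -/
theorem stmt_8 (K : Type*) [Field K] (n : ℕ)
    (T : Matrix (Fin n) (Fin n) ℤ) (β γ : Fin n → ℤ)
    (hγ : ∀ i, 1 ≤ γ i)
    (hdiag : ∀ i, T i i ≤ -1)
    (hoff : ∀ i j, i ≠ j → 1 ≤ T i j)
    (hβ : ∀ i, 0 ≤ β i)
    (hdet : T.det ≠ 0) :
    ∀ x : AddMonoidAlgebra K (Fin (n + 1) → ℤ),
      x ∈ Algebra.adjoin K
        (Set.range fun j : Fin (n + 1) =>
          AddMonoidAlgebra.single (Pi.single j 1 : Fin (n + 1) → ℤ) (1 : K)) →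
      ((∃ p q : Algebra.adjoin K (Set.range (kurodaPi K n T β γ)), q ≠ 0 ∧
          x * (q : AddMonoidAlgebra K (Fin (n + 1) → ℤ)) = p) ↔
        x ∈ Algebra.adjoin K (Set.range (kurodaPi K n T β γ))) :=
  stmt_8_general K n T β γ hγ hdet
end

section
/- Let $K$ be a field and let $a, b, c$ be algebraically independent over $K$. A monomial $a^i b^j c^k$ (with $i, j, k \geq 0$) lies in the subalgebra $K[ab, bc, ca]$ of $K[a, b, c]$ if and only if $i + j + k$ is even and $i + j \geq k$, $j + k \geq i$, $i + k \geq j$. -/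
/-!
A subalgebra generated by monomials is spanned by the monomials whose exponents lie in the
additive monoid generated by the exponents of the generators, so the question is which
`(i, j, k)` are of the form `p (1,1,0) + q (0,1,1) + r (1,0,1)`; solving for `p, q, r` gives
`p = (i + j - k) / 2` etc., which are natural numbers exactly under the stated conditions.
-/

open MvPolynomial Finsupp

theorem MvPolynomial.monomial_one_mem_adjoin_monomial_one_iff {σ R : Type*} [CommSemiring R]
    [Nontrivial R] (S : Set (σ →₀ ℕ)) (d : σ →₀ ℕ) :
    monomial d (1 : R) ∈ Algebra.adjoin R ((monomial · (1 : R)) '' S) ↔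
      d ∈ AddSubmonoid.closure S := by
  constructor
  · intro hd
    rw [← Subalgebra.mem_toSubmodule, Algebra.adjoin_eq_span] at hd
    have hclosure : (Submonoid.closure ((monomial · (1 : R)) '' S) : Set (MvPolynomial σ R)) ⊆
        basisMonomials σ R '' AddSubmonoid.closure S := by
      intro x hx
      induction hx using Submonoid.closure_induction with
      | mem y hy =>
        obtain ⟨e, he, rfl⟩ := hy
        exact ⟨e, AddSubmonoid.subset_closure he, by simp [coe_basisMonomials]⟩
      | one => exact ⟨0, zero_mem _, by simp [coe_basisMonomials]⟩
      | mul y z _ _ hy hz =>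
        obtain ⟨e, he, rfl⟩ := hy
        obtain ⟨f, hf, rfl⟩ := hz
        exact ⟨e + f, add_mem he hf, by simp [coe_basisMonomials, monomial_mul]⟩
    have hspan := Submodule.span_mono hclosure hd
    rw [show monomial d (1 : R) = basisMonomials σ R d by simp [coe_basisMonomials]] at hspan
    exact (Module.Basis.self_mem_span_image _).1 hspan
  · intro hd
    induction hd using AddSubmonoid.closure_induction with
    | mem e he => exact Algebra.subset_adjoin ⟨e, he, rfl⟩
    | zero => simp [monomial_zero']
    | add e f _ _ he hf => simpa [monomial_mul] using mul_mem he hf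

theorem mem_closure_pairSums_iff (d : Fin 3 →₀ ℕ) :
    d ∈ AddSubmonoid.closure
        {single 0 1 + single 1 1, single 1 1 + single 2 1, single 2 1 + single 0 1} ↔
      Even (d 0 + d 1 + d 2) ∧ d 2 ≤ d 0 + d 1 ∧ d 0 ≤ d 1 + d 2 ∧ d 1 ≤ d 0 + d 2 := by
  constructor
  · intro hd
    induction hd using AddSubmonoid.closure_induction with
    | mem e he =>
      rcases he with rfl | rfl | rfl <;> simp
    | zero => simp
    | add e f _ _ he hf =>
      obtain ⟨⟨m, hm⟩, he⟩ := he
      obtain ⟨⟨n, hn⟩, hf⟩ := hf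
      simp only [Finsupp.add_apply]
      exact ⟨⟨m + n, by omega⟩, by omega⟩
  · rintro ⟨⟨m, hm⟩, h₀₁, h₁₂, h₀₂⟩
    obtain ⟨p, q, r, hp, hq, hr⟩ : ∃ p q r, d 0 = p + r ∧ d 1 = p + q ∧ d 2 = q + r :=
      ⟨(d 0 + d 1 - d 2) / 2, (d 1 + d 2 - d 0) / 2, (d 0 + d 2 - d 1) / 2, by omega, by omega,
        by omega⟩
    have hd : d = p • (single 0 1 + single 1 1) + q • (single 1 1 + single 2 1) +
        r • (single 2 1 + single 0 1) := by
      ext x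
      fin_cases x <;> simp <;> omega
    rw [hd]
    exact add_mem (add_mem (nsmul_mem (AddSubmonoid.subset_closure (by simp)) p)
      (nsmul_mem (AddSubmonoid.subset_closure (by simp)) q))
      (nsmul_mem (AddSubmonoid.subset_closure (by simp)) r)

open MvPolynomial in
/-- A monomial `aⁱbʲcᵏ` lies in `K[ab, bc, ca]` iff `i + j + k` is even and
`i + j ≥ k`, `j + k ≥ i`, `i + k ≥ j`.  Here `a = X 0`, `b = X 1`, `c = X 2`. -/
theorem stmt_14 (K : Type*) [Field K] (i j k : ℕ) :
    (X 0 ^ i * X 1 ^ j * X 2 ^ k : MvPolynomial (Fin 3) K) ∈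
      Algebra.adjoin K
        {(X 0 * X 1 : MvPolynomial (Fin 3) K), X 1 * X 2, X 2 * X 0} ↔
    (Even (i + j + k) ∧ k ≤ i + j ∧ i ≤ j + k ∧ j ≤ i + k) := by
  have hmonomial : (X 0 ^ i * X 1 ^ j * X 2 ^ k : MvPolynomial (Fin 3) K) =
      monomial (single 0 i + single 1 j + single 2 k) 1 := by
    simp [X_pow_eq_monomial, monomial_mul]
  have hgenerators : {(X 0 * X 1 : MvPolynomial (Fin 3) K), X 1 * X 2, X 2 * X 0} =
      (monomial · (1 : K)) ''
        {single 0 1 + single 1 1, single 1 1 + single 2 1, single 2 1 + single 0 1} := by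
    simp [Set.image_insert_eq, X, monomial_mul]
  rw [hmonomial, hgenerators, monomial_one_mem_adjoin_monomial_one_iff, mem_closure_pairSums_iff]
  simp
end

section
/- Let $K$ be a field of characteristic $\neq 2$ and let $a, b, c$ be algebraically independent over $K$. Then $K[ab, bc, ca] \cap K[x - a^2, x - b^2, x - c^2] = K$, where $x$ is a further variable algebraically independent of $a, b, c$, and both subalgebras are taken inside $K[a, b, c, x]$. -/
/-!
Let `f = p(ab, bc, ca) = q(x - a², x - b², x - c²)`. As `f` does not involve `x`, substituting
`x := a²` gives `f = g(a² - c², b² - c²)` with `g(U, V) = q(0, U - V, U)`. Setting `c := 0` shows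
that `g(a², b²) = p(ab, 0, 0)` depends only on `ab`; replacing `a` by `ac`, resp. `b` by `bc`, gives
`g(a²c², b²) = g(a², b²c²)`, so `g(UW, V) = g(U, VW)` after removing the squares, and `V := 1`
shows `g(U, V) = h(UV)` for a one-variable `h`. Finally `a := b := 0` gives `h(c⁴) = p(0, 0, 0)`,
so `h`, and with it `f`, is constant.
-/

open MvPolynomial

namespace MvPolynomial

section CommSemiring

variable {R : Type*} [CommSemiring R]

lemma map_aeval_eq_aeval {σ A B : Type*} [CommSemiring A] [CommSemiring B] [Algebra R A]
    [Algebra R B] (φ : A →ₐ[R] B) {v : σ → A} {w : σ → B} (h : ∀ i, φ (v i) = w i)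
    (q : MvPolynomial σ R) : φ (aeval v q) = aeval w q := by
  simp only [comp_aeval_apply, h]

theorem eq_aeval_mul_of_aeval_mul_left_eq {g : MvPolynomial (Fin 2) R}
    (h : (aeval ![X 0 * X 2, X 1] g : MvPolynomial (Fin 3) R) = aeval ![X 0, X 1 * X 2] g) :
    g = Polynomial.aeval (X 0 * X 1) (aeval ![(Polynomial.X : Polynomial R), 1] g) := by
  have := congrArg (aeval ![X 0, 1, X 1] : MvPolynomial (Fin 3) R →ₐ[R] MvPolynomial (Fin 2) R) h
  rw [map_aeval_eq_aeval _ (w := ![X 0 * X 1, 1]) (by intro i; fin_cases i <;> simp),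
    map_aeval_eq_aeval _ (w := X) (by intro i; fin_cases i <;> simp), aeval_X_left_apply] at this
  rw [map_aeval_eq_aeval (Polynomial.aeval (X 0 * X 1)) (w := ![X 0 * X 1, 1])
    (by intro i; fin_cases i <;> simp), this]

theorem exists_eq_aeval_mul_of_aeval_sq_eq {g : MvPolynomial (Fin 2) R} {P : Polynomial R}
    (h : aeval ![X 0 ^ 2, X 1 ^ 2] g = Polynomial.aeval (X 0 * X 1 : MvPolynomial (Fin 2) R) P) :
    ∃ Q : Polynomial R, g = Polynomial.aeval (X 0 * X 1) Q := by
  have hsq (u v : MvPolynomial (Fin 3) R) :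
      aeval ![u ^ 2, v ^ 2] g = Polynomial.aeval (u * v) P := by
    have := congrArg (aeval ![u, v]) h
    rwa [map_aeval_eq_aeval _ (w := ![u ^ 2, v ^ 2]) (by intro i; fin_cases i <;> simp),
      ← Polynomial.aeval_algHom_apply, map_mul, aeval_X, aeval_X] at this
  refine ⟨_, eq_aeval_mul_of_aeval_mul_left_eq (expand_injective two_pos ?_)⟩
  rw [map_aeval_eq_aeval _ (w := ![(X 0 * X 2) ^ 2, X 1 ^ 2])
      (by intro i; fin_cases i <;> simp [mul_pow]),
    map_aeval_eq_aeval _ (w := ![X 0 ^ 2, (X 1 * X 2) ^ 2])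
      (by intro i; fin_cases i <;> simp [mul_pow]),
    hsq, hsq, mul_right_comm, mul_assoc]

end CommSemiring

theorem aeval_mul_eq_aeval_sq_sub_sq {R : Type*} [CommRing R] {p q : MvPolynomial (Fin 3) R}
    (hq : (aeval ![X 3 - X 0 ^ 2, X 3 - X 1 ^ 2, X 3 - X 2 ^ 2] q : MvPolynomial (Fin 4) R) =
      aeval ![X 0 * X 1, X 1 * X 2, X 2 * X 0] p)
    {A : Type*} [CommRing A] [Algebra R A] (a b c : A) :
    aeval ![a * b, b * c, c * a] p = aeval ![a ^ 2 - c ^ 2, b ^ 2 - c ^ 2]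
      (aeval ![0, X 0 - X 1, X 0] q : MvPolynomial (Fin 2) R) := by
  have := congrArg (aeval ![a, b, c, a ^ 2]) hq
  rw [map_aeval_eq_aeval _ (w := ![a * b, b * c, c * a]) (by intro i; fin_cases i <;> simp) p,
    map_aeval_eq_aeval _ (w := ![0, a ^ 2 - b ^ 2, a ^ 2 - c ^ 2])
      (by intro i; fin_cases i <;> simp) q] at this
  rw [← this]
  exact (map_aeval_eq_aeval (aeval ![a ^ 2 - c ^ 2, b ^ 2 - c ^ 2])
    (by intro i; fin_cases i <;> simp) q).symm

end MvPolynomial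

lemma Algebra.adjoin_triple_eq_range_aeval (R : Type*) {A : Type*} [CommSemiring R]
    [CommSemiring A] [Algebra R A] (x y z : A) :
    Algebra.adjoin R {x, y, z} = (aeval ![x, y, z] : MvPolynomial (Fin 3) R →ₐ[R] A).range := by
  rw [← Algebra.adjoin_range_eq_range_aeval, Matrix.range_cons, Matrix.range_cons,
    Matrix.range_cons_empty, Set.singleton_union, Set.singleton_union]

open MvPolynomial in
theorem stmt_15_general (K : Type*) [Field K] :
    Algebra.adjoin K {(X 0 * X 1 : MvPolynomial (Fin 4) K), X 1 * X 2, X 2 * X 0} ⊓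
      Algebra.adjoin K {(X 3 - X 0 ^ 2 : MvPolynomial (Fin 4) K),
        X 3 - X 1 ^ 2, X 3 - X 2 ^ 2} = ⊥ := by
  refine eq_bot_iff.2 fun f ⟨hfp, hfq⟩ => ?_
  rw [Algebra.adjoin_triple_eq_range_aeval] at hfp hfq
  obtain ⟨p, rfl⟩ := (AlgHom.mem_range _).1 hfp
  obtain ⟨q, hq⟩ := (AlgHom.mem_range _).1 hfq
  have hf := aeval_mul_eq_aeval_sq_sub_sq hq (X 0 : MvPolynomial (Fin 4) K) (X 1) (X 2)
  have hc := aeval_mul_eq_aeval_sq_sub_sq hq (X 0 : MvPolynomial (Fin 2) K) (X 1) 0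
  have hab := aeval_mul_eq_aeval_sq_sub_sq hq (0 : Polynomial K) 0 Polynomial.X
  simp only [mul_zero, zero_mul, zero_pow two_ne_zero, sub_zero, zero_sub] at hc hab
  rw [← map_aeval_eq_aeval (Polynomial.aeval (X 0 * X 1)) (v := ![Polynomial.X, 0, 0])
    (by intro i; fin_cases i <;> simp) p] at hc
  obtain ⟨h, hgh⟩ := exists_eq_aeval_mul_of_aeval_sq_eq hc.symm
  have hh : Polynomial.expand K 4 h = Polynomial.C (constantCoeff p) := by
    rw [hgh, ← Polynomial.aeval_algHom_apply, map_mul, aeval_X, aeval_X] at hab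
    simp only [Matrix.cons_zero_zero, ← Matrix.zero_empty, aeval_zero, Matrix.cons_val_zero,
      Matrix.cons_val_one, neg_mul_neg, ← pow_add, Polynomial.algebraMap_eq] at hab
    rw [hab, ← Polynomial.expand_aeval, Polynomial.aeval_X_left_apply]
  rw [Polynomial.expand_eq_C four_pos] at hh
  refine Algebra.mem_bot.2 ⟨constantCoeff p, ?_⟩
  rw [hf, hgh, hh]
  simp

open MvPolynomial in
/-- If `char K ≠ 2` then `K[ab, bc, ca] ∩ K[x − a², x − b², x − c²] = K`
inside `K[a, b, c, x]`.  Here `a = X 0`, `b = X 1`, `c = X 2`, `x = X 3`. -/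
theorem stmt_15 (K : Type*) [Field K] (hchar : ringChar K ≠ 2) :
    Algebra.adjoin K {(X 0 * X 1 : MvPolynomial (Fin 4) K), X 1 * X 2, X 2 * X 0} ⊓
      Algebra.adjoin K {(X 3 - X 0 ^ 2 : MvPolynomial (Fin 4) K),
        X 3 - X 1 ^ 2, X 3 - X 2 ^ 2} = ⊥ :=
  stmt_15_general K
end

section
/- Let $K$ be a field of characteristic $2$ and let $a, b, c, x$ be algebraically independent over $K$. Then the element $(b^2 - a^2)(c^2 - a^2) + (x - a^2)^2 = (bc)^2 - (ac)^2 - (ab)^2 + x^2$ is a non-zero non-constant element of $K[x - a^2, x - b^2, x - c^2] \cap K[x, ab, bc, ca]$; in particular $K[x - a^2, x - b^2, x - c^2] \cap K[x, ab, bc, ca] \neq K$. -/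
open MvPolynomial in
/-- In characteristic `2`, `(b² − a²)(c² − a²) + (x − a²)² = (bc)² − (ac)² − (ab)² + x²`
is a non-zero non-constant element of `K[x − a², x − b², x − c²] ∩ K[x, ab, bc, ca]`;
in particular the intersection is strictly larger than `K`.
Here `a = X 0`, `b = X 1`, `c = X 2`, `x = X 3` in `K[a, b, c, x]`. -/
theorem stmt_16 (K : Type*) [Field K] [CharP K 2] :
    ((X 1 ^ 2 - X 0 ^ 2) * (X 2 ^ 2 - X 0 ^ 2) + (X 3 - X 0 ^ 2) ^ 2
        : MvPolynomial (Fin 4) K) =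
      (X 1 * X 2) ^ 2 - (X 0 * X 2) ^ 2 - (X 0 * X 1) ^ 2 + X 3 ^ 2 ∧
    ((X 1 ^ 2 - X 0 ^ 2) * (X 2 ^ 2 - X 0 ^ 2) + (X 3 - X 0 ^ 2) ^ 2
        : MvPolynomial (Fin 4) K) ≠ 0 ∧
    ((X 1 ^ 2 - X 0 ^ 2) * (X 2 ^ 2 - X 0 ^ 2) + (X 3 - X 0 ^ 2) ^ 2
        : MvPolynomial (Fin 4) K) ∈
      Algebra.adjoin K {(X 3 - X 0 ^ 2 : MvPolynomial (Fin 4) K),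
        X 3 - X 1 ^ 2, X 3 - X 2 ^ 2} ⊓
      Algebra.adjoin K {(X 3 : MvPolynomial (Fin 4) K), X 0 * X 1, X 1 * X 2, X 2 * X 0} ∧
    ((X 1 ^ 2 - X 0 ^ 2) * (X 2 ^ 2 - X 0 ^ 2) + (X 3 - X 0 ^ 2) ^ 2
        : MvPolynomial (Fin 4) K) ∉ (⊥ : Subalgebra K (MvPolynomial (Fin 4) K)) ∧
    Algebra.adjoin K {(X 3 - X 0 ^ 2 : MvPolynomial (Fin 4) K),
        X 3 - X 1 ^ 2, X 3 - X 2 ^ 2} ⊓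
      Algebra.adjoin K {(X 3 : MvPolynomial (Fin 4) K), X 0 * X 1, X 1 * X 2, X 2 * X 0}
      ≠ ⊥ := by
  have h2 : (2 : MvPolynomial (Fin 4) K) = 0 := by
    have := CharP.cast_eq_zero (MvPolynomial (Fin 4) K) 2
    simpa using this
  have heval : ∀ v : Fin 4 → K,
      (aeval v) ((X 1 ^ 2 - X 0 ^ 2) * (X 2 ^ 2 - X 0 ^ 2) + (X 3 - X 0 ^ 2) ^ 2
        : MvPolynomial (Fin 4) K)
      = (v 1 ^ 2 - v 0 ^ 2) * (v 2 ^ 2 - v 0 ^ 2) + (v 3 - v 0 ^ 2) ^ 2 := by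
    intro v; simp
  have hne : ((X 1 ^ 2 - X 0 ^ 2) * (X 2 ^ 2 - X 0 ^ 2) + (X 3 - X 0 ^ 2) ^ 2
      : MvPolynomial (Fin 4) K) ≠ 0 := by
    intro h
    have := congrArg (aeval (![0,1,1,0] : Fin 4 → K)) h
    rw [heval] at this
    simp at this
  have hmem : ((X 1 ^ 2 - X 0 ^ 2) * (X 2 ^ 2 - X 0 ^ 2) + (X 3 - X 0 ^ 2) ^ 2
      : MvPolynomial (Fin 4) K) ∈
      Algebra.adjoin K {(X 3 - X 0 ^ 2 : MvPolynomial (Fin 4) K),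
        X 3 - X 1 ^ 2, X 3 - X 2 ^ 2} ⊓
      Algebra.adjoin K {(X 3 : MvPolynomial (Fin 4) K), X 0 * X 1, X 1 * X 2, X 2 * X 0} := by
    constructor
    · have key : ((X 1 ^ 2 - X 0 ^ 2) * (X 2 ^ 2 - X 0 ^ 2) + (X 3 - X 0 ^ 2) ^ 2
          : MvPolynomial (Fin 4) K) =
          ((X 3 - X 0 ^ 2) - (X 3 - X 1 ^ 2)) * ((X 3 - X 0 ^ 2) - (X 3 - X 2 ^ 2))
            + (X 3 - X 0 ^ 2) ^ 2 := by ring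
      rw [key]
      have m1 : (X 3 - X 0 ^ 2 : MvPolynomial (Fin 4) K) ∈
          Algebra.adjoin K {(X 3 - X 0 ^ 2 : MvPolynomial (Fin 4) K),
            X 3 - X 1 ^ 2, X 3 - X 2 ^ 2} :=
        Algebra.subset_adjoin (Set.mem_insert _ _)
      have m2 : (X 3 - X 1 ^ 2 : MvPolynomial (Fin 4) K) ∈
          Algebra.adjoin K {(X 3 - X 0 ^ 2 : MvPolynomial (Fin 4) K),
            X 3 - X 1 ^ 2, X 3 - X 2 ^ 2} :=
        Algebra.subset_adjoin (Set.mem_insert_of_mem _ (Set.mem_insert _ _))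
      have m3 : (X 3 - X 2 ^ 2 : MvPolynomial (Fin 4) K) ∈
          Algebra.adjoin K {(X 3 - X 0 ^ 2 : MvPolynomial (Fin 4) K),
            X 3 - X 1 ^ 2, X 3 - X 2 ^ 2} :=
        Algebra.subset_adjoin
          (Set.mem_insert_of_mem _ (Set.mem_insert_of_mem _ rfl))
      exact add_mem (mul_mem (sub_mem m1 m2) (sub_mem m1 m3)) (pow_mem m1 2)
    · have key : ((X 1 ^ 2 - X 0 ^ 2) * (X 2 ^ 2 - X 0 ^ 2) + (X 3 - X 0 ^ 2) ^ 2
          : MvPolynomial (Fin 4) K) =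
          (X 1 * X 2) ^ 2 - (X 2 * X 0) ^ 2 - (X 0 * X 1) ^ 2 + X 3 ^ 2 := by
        linear_combination (X 0 ^ 4 - X 0 ^ 2 * X 3 : MvPolynomial (Fin 4) K) * h2
      rw [key]
      have m0 : (X 3 : MvPolynomial (Fin 4) K) ∈
          Algebra.adjoin K {(X 3 : MvPolynomial (Fin 4) K), X 0 * X 1, X 1 * X 2, X 2 * X 0} :=
        Algebra.subset_adjoin (Set.mem_insert _ _)
      have m1 : (X 0 * X 1 : MvPolynomial (Fin 4) K) ∈
          Algebra.adjoin K {(X 3 : MvPolynomial (Fin 4) K), X 0 * X 1, X 1 * X 2, X 2 * X 0} :=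
        Algebra.subset_adjoin (Set.mem_insert_of_mem _ (Set.mem_insert _ _))
      have m2 : (X 1 * X 2 : MvPolynomial (Fin 4) K) ∈
          Algebra.adjoin K {(X 3 : MvPolynomial (Fin 4) K), X 0 * X 1, X 1 * X 2, X 2 * X 0} :=
        Algebra.subset_adjoin
          (Set.mem_insert_of_mem _ (Set.mem_insert_of_mem _ (Set.mem_insert _ _)))
      have m3 : (X 2 * X 0 : MvPolynomial (Fin 4) K) ∈
          Algebra.adjoin K {(X 3 : MvPolynomial (Fin 4) K), X 0 * X 1, X 1 * X 2, X 2 * X 0} :=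
        Algebra.subset_adjoin (Set.mem_insert_of_mem _ (Set.mem_insert_of_mem _
          (Set.mem_insert_of_mem _ rfl)))
      exact add_mem (sub_mem (sub_mem (pow_mem m2 2) (pow_mem m3 2)) (pow_mem m1 2))
        (pow_mem m0 2)
  have hnbot : ((X 1 ^ 2 - X 0 ^ 2) * (X 2 ^ 2 - X 0 ^ 2) + (X 3 - X 0 ^ 2) ^ 2
      : MvPolynomial (Fin 4) K) ∉ (⊥ : Subalgebra K (MvPolynomial (Fin 4) K)) := by
    rw [Algebra.mem_bot]
    rintro ⟨k, hk⟩
    have e1 := congrArg (aeval (![0,1,1,0] : Fin 4 → K)) hk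
    have e2 := congrArg (aeval (![0,0,0,0] : Fin 4 → K)) hk
    rw [heval] at e1 e2
    simp at e1 e2
    exact one_ne_zero (e1.symm.trans e2)
  refine ⟨?_, hne, hmem, hnbot, ?_⟩
  · linear_combination (X 0 ^ 4 - X 0 ^ 2 * X 3 : MvPolynomial (Fin 4) K) * h2
  · intro h
    rw [h] at hmem
    exact hnbot hmem
end

section
/- In the Kuroda $n = 4$ setup with condition $(\ast)$, there exist positive integers $p_1, p_2, p_3$ such that, setting $p = p_1 + p_2 + p_3$, one has $p_i \geq p\,\xi_i$ for $i = 1, 2, 3$; moreover, for any such $p_1, p_2, p_3$, the element $f_0 = (Y_3 - Y_2)^{p_1}(Y_3 - Y_1)^{p_2}(Y_2 - Y_1)^{p_3}$ lies in the polynomial ring $K[X_1, X_2, X_3, X_4]$. -/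
/-- The variable `Xᵢ` viewed in the fraction field `K(X₁, X₂, X₃, X₄)`. -/
noncomputable def Xv (K : Type*) [Field K] (i : Fin 4) :
    FractionRing (MvPolynomial (Fin 4) K) :=
  algebraMap (MvPolynomial (Fin 4) K) _ (MvPolynomial.X i)

/-- The Laurent monomials of Kuroda's `n = 4` construction:
`Y₁ = X₁^{-δ₁₁}X₂^{δ₁₂}X₃^{δ₁₃}X₄^{δ₁₄}`, `Y₂ = X₁^{δ₂₁}X₂^{-δ₂₂}X₃^{δ₂₃}X₄^{δ₂₄}`,
`Y₃ = X₁^{δ₃₁}X₂^{δ₃₂}X₃^{-δ₃₃}X₄^{δ₃₄}`, where `d i j = δ_{(i+1)(j+1)}`. -/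
noncomputable def Yk (K : Type*) [Field K] (d : Fin 3 → Fin 4 → ℤ) :
    Fin 3 → FractionRing (MvPolynomial (Fin 4) K) :=
  ![Xv K 0 ^ (-d 0 0) * Xv K 1 ^ d 0 1 * Xv K 2 ^ d 0 2 * Xv K 3 ^ d 0 3,
    Xv K 0 ^ d 1 0 * Xv K 1 ^ (-d 1 1) * Xv K 2 ^ d 1 2 * Xv K 3 ^ d 1 3,
    Xv K 0 ^ d 2 0 * Xv K 1 ^ d 2 1 * Xv K 2 ^ (-d 2 2) * Xv K 3 ^ d 2 3]

/-- The rational numbers `ξ₁ = δ₁₁/(δ₁₁ + min(δ₂₁, δ₃₁))`,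
`ξ₂ = δ₂₂/(δ₂₂ + min(δ₃₂, δ₁₂))`, `ξ₃ = δ₃₃/(δ₃₃ + min(δ₁₃, δ₂₃))`. -/
noncomputable def kxi (d : Fin 3 → Fin 4 → ℤ) : Fin 3 → ℚ :=
  ![(d 0 0 : ℚ) / ((d 0 0 : ℚ) + min (d 1 0 : ℚ) (d 2 0 : ℚ)),
    (d 1 1 : ℚ) / ((d 1 1 : ℚ) + min (d 2 1 : ℚ) (d 0 1 : ℚ)),
    (d 2 2 : ℚ) / ((d 2 2 : ℚ) + min (d 0 2 : ℚ) (d 1 2 : ℚ))]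

section Aux

lemma kuroda_comb4 {R : Type*} [Field R] (x y z w : R) (hx : x ≠ 0) (hy : y ≠ 0)
    (hz : z ≠ 0) (hw : w ≠ 0)
    (a1 b1 c1 f1 a2 b2 c2 f2 a3 b3 c3 f3 : ℤ) (n1 n2 n3 : ℕ) :
    (x ^ a1 * y ^ b1 * z ^ c1 * w ^ f1) ^ n1 * (x ^ a2 * y ^ b2 * z ^ c2 * w ^ f2) ^ n2 *
      (x ^ a3 * y ^ b3 * z ^ c3 * w ^ f3) ^ n3 =
    x ^ (a1 * n1 + a2 * n2 + a3 * n3) * y ^ (b1 * n1 + b2 * n2 + b3 * n3) *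
      z ^ (c1 * n1 + c2 * n2 + c3 * n3) * w ^ (f1 * n1 + f2 * n2 + f3 * n3) := by
  simp only [mul_pow]
  simp only [← zpow_natCast, ← zpow_mul, zpow_add₀ hx, zpow_add₀ hy, zpow_add₀ hz,
    zpow_add₀ hw]
  ring

lemma kuroda_exp_key (d0 dA dB m p1 e1 e2 e3 : ℤ)
    (hmA : m ≤ dA) (hmB : m ≤ dB)
    (he2 : 0 ≤ e2) (he3 : 0 ≤ e3) (hd0m : 0 ≤ d0 + m)
    (hp1 : p1 ≤ e2 + e3)
    (hkey : (e1 + e2 + e3) * d0 ≤ p1 * (d0 + m)) :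
    0 ≤ -d0 * e1 + dA * e2 + dB * e3 := by
  have h1 : m * e2 ≤ dA * e2 := mul_le_mul_of_nonneg_right hmA he2
  have h2 : m * e3 ≤ dB * e3 := mul_le_mul_of_nonneg_right hmB he3
  have h3 : (d0 + m) * p1 ≤ (d0 + m) * (e2 + e3) := mul_le_mul_of_nonneg_left hp1 hd0m
  nlinarith [h1, h2, h3, hkey]

lemma kuroda_rat_key (a m : ℤ) (ha : 0 < a) (hm : 0 < m) (p p1 : ℕ)
    (h : (p : ℚ) * ((a : ℚ) / ((a : ℚ) + (m : ℚ))) ≤ p1) :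
    (p : ℤ) * a ≤ (p1 : ℤ) * (a + m) := by
  have hpos : (0 : ℚ) < (a : ℚ) + (m : ℚ) := by
    have h1 : (0:ℚ) < (a:ℚ) := by exact_mod_cast ha
    have h2 : (0:ℚ) < (m:ℚ) := by exact_mod_cast hm
    linarith
  rw [← mul_div_assoc, div_le_iff₀ hpos] at h
  exact_mod_cast h

lemma kuroda_toNat_key (q : ℚ) (hq : 0 < q) : (q.num.toNat : ℚ) = q * q.den := by
  rw [show ((q.num.toNat : ℕ) : ℚ) = (q.num : ℚ) by
    exact_mod_cast congrArg (fun z : ℤ => (z : ℚ)) (Int.toNat_of_nonneg (Rat.num_nonneg.mpr hq.le))]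
  have h2 : q * (q.den:ℚ) = ((q.num:ℚ) / q.den) * q.den := by rw [Rat.num_div_den]
  rw [div_mul_cancel₀ _ (show (q.den:ℚ) ≠ 0 by exact_mod_cast q.den_pos.ne')] at h2
  exact h2.symm

lemma kuroda_exists_p (q0 q1 q2 : ℚ) (h0 : 0 < q0) (h1 : 0 < q1) (h2 : 0 < q2)
    (hs : q0 + q1 + q2 < 1) :
    ∃ p1 p2 p3 : ℕ, 0 < p1 ∧ 0 < p2 ∧ 0 < p3 ∧
      ((p1 + p2 + p3 : ℕ) : ℚ) * q0 ≤ p1 ∧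
      ((p1 + p2 + p3 : ℕ) : ℚ) * q1 ≤ p2 ∧
      ((p1 + p2 + p3 : ℕ) : ℚ) * q2 ≤ p3 := by
  have hn0 : 0 < q0.num.toNat := by have := Rat.num_pos.mpr h0; omega
  have hn1 : 0 < q1.num.toNat := by have := Rat.num_pos.mpr h1; omega
  have hn2 : 0 < q2.num.toNat := by have := Rat.num_pos.mpr h2; omega
  refine ⟨q0.num.toNat * (q1.den * q2.den), q1.num.toNat * (q0.den * q2.den),
    q2.num.toNat * (q0.den * q1.den),
    Nat.mul_pos hn0 (Nat.mul_pos q1.pos q2.pos),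
    Nat.mul_pos hn1 (Nat.mul_pos q0.pos q2.pos),
    Nat.mul_pos hn2 (Nat.mul_pos q0.pos q1.pos), ?_, ?_, ?_⟩ <;>
  · have hB : (0:ℚ) ≤ (q0.den : ℚ) * q1.den * q2.den := by positivity
    push_cast
    rw [kuroda_toNat_key q0 h0, kuroda_toNat_key q1 h1, kuroda_toNat_key q2 h2]
    nlinarith [hB, h0.le, h1.le, h2.le,
      mul_nonneg (mul_nonneg hB h0.le) (by linarith : (0:ℚ) ≤ 1 - (q0+q1+q2)),
      mul_nonneg (mul_nonneg hB h1.le) (by linarith : (0:ℚ) ≤ 1 - (q0+q1+q2)),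
      mul_nonneg (mul_nonneg hB h2.le) (by linarith : (0:ℚ) ≤ 1 - (q0+q1+q2))]

variable {K : Type*} [Field K]

lemma Xv_ne_zero (i : Fin 4) : Xv K i ≠ 0 := by
  have h := IsFractionRing.injective (MvPolynomial (Fin 4) K)
    (FractionRing (MvPolynomial (Fin 4) K))
  simpa [Xv] using (map_ne_zero_iff _ h).2 (MvPolynomial.X_ne_zero i)

lemma kuroda_mono_mem (a b c e : ℤ) (ha : 0 ≤ a) (hb : 0 ≤ b) (hc : 0 ≤ c) (he : 0 ≤ e) :
    Xv K 0 ^ a * Xv K 1 ^ b * Xv K 2 ^ c * Xv K 3 ^ e ∈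
      Algebra.adjoin K (Set.range (Xv K)) := by
  have hX : ∀ i, Xv K i ∈ Algebra.adjoin K (Set.range (Xv K)) := fun i =>
    Algebra.subset_adjoin ⟨i, rfl⟩
  lift a to ℕ using ha
  lift b to ℕ using hb
  lift c to ℕ using hc
  lift e to ℕ using he
  simp only [zpow_natCast]
  exact mul_mem (mul_mem (mul_mem (pow_mem (hX 0) _) (pow_mem (hX 1) _)) (pow_mem (hX 2) _))
    (pow_mem (hX 3) _)

end Aux

set_option maxHeartbeats 2000000 in
/-- Under condition `(∗)` (`ξ₁ + ξ₂ + ξ₃ < 1`) there exist positive integers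
`p₁, p₂, p₃` with `pᵢ ≥ p ξᵢ` for `p = p₁ + p₂ + p₃`; and for any such `p₁, p₂, p₃`
the element `f₀ = (Y₃−Y₂)^{p₁}(Y₃−Y₁)^{p₂}(Y₂−Y₁)^{p₃}` lies in `K[X₁,X₂,X₃,X₄]`. -/
theorem stmt_17 (K : Type*) [Field K] [CharZero K] (γ : ℤ) (d : Fin 3 → Fin 4 → ℤ)
    (hγ : 1 ≤ γ) (hd : ∀ i : Fin 3, ∀ j : Fin 3, 1 ≤ d i j.castSucc)
    (hd4 : ∀ i : Fin 3, 0 ≤ d i 3)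
    (hxi : kxi d 0 + kxi d 1 + kxi d 2 < 1) :
    (∃ p1 p2 p3 : ℕ, 0 < p1 ∧ 0 < p2 ∧ 0 < p3 ∧
      ((p1 + p2 + p3 : ℕ) : ℚ) * kxi d 0 ≤ p1 ∧
      ((p1 + p2 + p3 : ℕ) : ℚ) * kxi d 1 ≤ p2 ∧
      ((p1 + p2 + p3 : ℕ) : ℚ) * kxi d 2 ≤ p3) ∧
    ∀ p1 p2 p3 : ℕ, 0 < p1 → 0 < p2 → 0 < p3 →
      ((p1 + p2 + p3 : ℕ) : ℚ) * kxi d 0 ≤ p1 →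
      ((p1 + p2 + p3 : ℕ) : ℚ) * kxi d 1 ≤ p2 →
      ((p1 + p2 + p3 : ℕ) : ℚ) * kxi d 2 ≤ p3 →
      (Yk K d 2 - Yk K d 1) ^ p1 * (Yk K d 2 - Yk K d 0) ^ p2 *
          (Yk K d 1 - Yk K d 0) ^ p3 ∈
        Algebra.adjoin K (Set.range (Xv K)) := by
  -- entries of `d` in the first three columns are ≥ 1
  have hd0 : ∀ i : Fin 3, 1 ≤ d i 0 := fun i => by
    have := hd i 0; rwa [show ((0 : Fin 3).castSucc) = (0 : Fin 4) from rfl] at this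
  have hd1 : ∀ i : Fin 3, 1 ≤ d i 1 := fun i => by
    have := hd i 1; rwa [show ((1 : Fin 3).castSucc) = (1 : Fin 4) from rfl] at this
  have hd2 : ∀ i : Fin 3, 1 ≤ d i 2 := fun i => by
    have := hd i 2; rwa [show ((2 : Fin 3).castSucc) = (2 : Fin 4) from rfl] at this
  -- unfold the ξᵢ
  have hk0 : kxi d 0 = (d 0 0 : ℚ) / ((d 0 0 : ℚ) + ((min (d 1 0) (d 2 0) : ℤ) : ℚ)) := by
    simp [kxi, Int.cast_min]
  have hk1 : kxi d 1 = (d 1 1 : ℚ) / ((d 1 1 : ℚ) + ((min (d 2 1) (d 0 1) : ℤ) : ℚ)) := by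
    simp [kxi, Int.cast_min]
  have hk2 : kxi d 2 = (d 2 2 : ℚ) / ((d 2 2 : ℚ) + ((min (d 0 2) (d 1 2) : ℤ) : ℚ)) := by
    simp [kxi, Int.cast_min]
  have hm0 : (1:ℤ) ≤ min (d 1 0) (d 2 0) := le_min (hd0 1) (hd0 2)
  have hm1 : (1:ℤ) ≤ min (d 2 1) (d 0 1) := le_min (hd1 2) (hd1 0)
  have hm2 : (1:ℤ) ≤ min (d 0 2) (d 1 2) := le_min (hd2 0) (hd2 1)
  have hq0 : 0 < kxi d 0 := by
    rw [hk0]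
    apply div_pos
    · exact_mod_cast lt_of_lt_of_le zero_lt_one (by exact_mod_cast hd0 0)
    · have : (1:ℚ) ≤ (d 0 0 : ℚ) := by exact_mod_cast hd0 0
      have : (1:ℚ) ≤ ((min (d 1 0) (d 2 0) : ℤ) : ℚ) := by exact_mod_cast hm0
      linarith [show (1:ℚ) ≤ (d 0 0 : ℚ) by exact_mod_cast hd0 0]
  have hq1 : 0 < kxi d 1 := by
    rw [hk1]
    apply div_pos
    · exact_mod_cast lt_of_lt_of_le zero_lt_one (by exact_mod_cast hd1 1)
    · have h1 : (1:ℚ) ≤ (d 1 1 : ℚ) := by exact_mod_cast hd1 1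
      have h2 : (1:ℚ) ≤ ((min (d 2 1) (d 0 1) : ℤ) : ℚ) := by exact_mod_cast hm1
      linarith
  have hq2 : 0 < kxi d 2 := by
    rw [hk2]
    apply div_pos
    · exact_mod_cast lt_of_lt_of_le zero_lt_one (by exact_mod_cast hd2 2)
    · have h1 : (1:ℚ) ≤ (d 2 2 : ℚ) := by exact_mod_cast hd2 2
      have h2 : (1:ℚ) ≤ ((min (d 0 2) (d 1 2) : ℤ) : ℚ) := by exact_mod_cast hm2
      linarith
  constructor
  · exact kuroda_exists_p _ _ _ hq0 hq1 hq2 hxi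
  intro p1 p2 p3 hp1 hp2 hp3 h1 h2 h3
  -- integer versions of the hypotheses
  rw [hk0] at h1; rw [hk1] at h2; rw [hk2] at h3
  have key1 : ((p1 + p2 + p3 : ℕ) : ℤ) * d 0 0 ≤ (p1 : ℤ) * (d 0 0 + min (d 1 0) (d 2 0)) :=
    kuroda_rat_key _ _ (by linarith [hd0 0]) (by linarith [hm0]) _ _ h1
  have key2 : ((p1 + p2 + p3 : ℕ) : ℤ) * d 1 1 ≤ (p2 : ℤ) * (d 1 1 + min (d 2 1) (d 0 1)) :=
    kuroda_rat_key _ _ (by linarith [hd1 1]) (by linarith [hm1]) _ _ h2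
  have key3 : ((p1 + p2 + p3 : ℕ) : ℤ) * d 2 2 ≤ (p3 : ℤ) * (d 2 2 + min (d 0 2) (d 1 2)) :=
    kuroda_rat_key _ _ (by linarith [hd2 2]) (by linarith [hm2]) _ _ h3
  set S := Algebra.adjoin K (Set.range (Xv K)) with hS
  -- membership of products of powers of the Yᵢ
  have hYmem : ∀ e1 e2 e3 : ℕ, p1 ≤ e2 + e3 → p2 ≤ e1 + e3 → p3 ≤ e1 + e2 →
      e1 + e2 + e3 = p1 + p2 + p3 →
      Yk K d 0 ^ e1 * Yk K d 1 ^ e2 * Yk K d 2 ^ e3 ∈ S := by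
    intro e1 e2 e3 he1 he2 he3 hesum
    have hY0 : Yk K d 0 = Xv K 0 ^ (-d 0 0) * Xv K 1 ^ d 0 1 * Xv K 2 ^ d 0 2 * Xv K 3 ^ d 0 3 := by
      simp [Yk]
    have hY1 : Yk K d 1 = Xv K 0 ^ d 1 0 * Xv K 1 ^ (-d 1 1) * Xv K 2 ^ d 1 2 * Xv K 3 ^ d 1 3 := by
      simp [Yk]
    have hY2 : Yk K d 2 = Xv K 0 ^ d 2 0 * Xv K 1 ^ d 2 1 * Xv K 2 ^ (-d 2 2) * Xv K 3 ^ d 2 3 := by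
      simp [Yk]
    have hc := kuroda_comb4 (Xv K 0) (Xv K 1) (Xv K 2) (Xv K 3) (Xv_ne_zero 0) (Xv_ne_zero 1)
      (Xv_ne_zero 2) (Xv_ne_zero 3) (-d 0 0) (d 0 1) (d 0 2) (d 0 3)
      (d 1 0) (-d 1 1) (d 1 2) (d 1 3) (d 2 0) (d 2 1) (-d 2 2) (d 2 3) e1 e2 e3
    rw [hY0, hY1, hY2, hc]
    have hesumZ : (e1 : ℤ) + e2 + e3 = ((p1 + p2 + p3 : ℕ) : ℤ) := by exact_mod_cast hesum
    apply kuroda_mono_mem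
    · have := kuroda_exp_key (d 0 0) (d 1 0) (d 2 0) (min (d 1 0) (d 2 0)) p1 e1 e2 e3
        (min_le_left _ _) (min_le_right _ _) (by positivity) (by positivity)
        (by linarith [hd0 0, hm0]) (by exact_mod_cast he1) (by rw [hesumZ]; exact key1)
      linarith
    · have := kuroda_exp_key (d 1 1) (d 0 1) (d 2 1) (min (d 2 1) (d 0 1)) p2 e2 e1 e3
        (min_le_right _ _) (min_le_left _ _) (by positivity) (by positivity)
        (by linarith [hd1 1, hm1]) (by exact_mod_cast he2)
        (by rw [show (e2:ℤ) + e1 + e3 = (e1:ℤ) + e2 + e3 by ring, hesumZ]; exact key2)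
      linarith
    · have := kuroda_exp_key (d 2 2) (d 0 2) (d 1 2) (min (d 0 2) (d 1 2)) p3 e3 e1 e2
        (min_le_left _ _) (min_le_right _ _) (by positivity) (by positivity)
        (by linarith [hd2 2, hm2]) (by exact_mod_cast he3)
        (by rw [show (e3:ℤ) + e1 + e2 = (e1:ℤ) + e2 + e3 by ring, hesumZ]; exact key3)
      linarith
    · have h01 := hd4 0; have h11 := hd4 1; have h21 := hd4 2
      positivity
  -- expand the product of binomial powers
  rw [sub_eq_add_neg (Yk K d 2) (Yk K d 1), sub_eq_add_neg (Yk K d 2) (Yk K d 0),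
    sub_eq_add_neg (Yk K d 1) (Yk K d 0), add_pow, add_pow, add_pow,
    Finset.sum_mul_sum, Finset.sum_mul]
  refine Subalgebra.sum_mem _ fun a ha => ?_
  rw [Finset.sum_mul]
  refine Subalgebra.sum_mem _ fun b hb => ?_
  rw [Finset.mul_sum]
  refine Subalgebra.sum_mem _ fun c hc => ?_
  rw [Finset.mem_range] at ha hb hc
  have hmem := hYmem ((p2 - b) + (p3 - c)) ((p1 - a) + c) (a + b)
    (by omega) (by omega) (by omega) (by omega)
  have heq : Yk K d 2 ^ a * (-Yk K d 1) ^ (p1 - a) * ((p1.choose a : ℕ) :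
        FractionRing (MvPolynomial (Fin 4) K)) *
      (Yk K d 2 ^ b * (-Yk K d 0) ^ (p2 - b) * (p2.choose b : ℕ)) *
      (Yk K d 1 ^ c * (-Yk K d 0) ^ (p3 - c) * (p3.choose c : ℕ)) =
      ((-1 : FractionRing (MvPolynomial (Fin 4) K)) ^ (p1 - a) * (-1) ^ (p2 - b) *
        (-1) ^ (p3 - c) * (p1.choose a : ℕ) * (p2.choose b : ℕ) * (p3.choose c : ℕ)) *
      (Yk K d 0 ^ ((p2 - b) + (p3 - c)) * Yk K d 1 ^ ((p1 - a) + c) * Yk K d 2 ^ (a + b)) := by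
    rw [neg_pow (Yk K d 1), neg_pow (Yk K d 0), neg_pow (Yk K d 0)]
    ring
  rw [heq]
  have hone : (-1 : FractionRing (MvPolynomial (Fin 4) K)) ∈ S := neg_mem (one_mem S)
  exact mul_mem (mul_mem (mul_mem (mul_mem (mul_mem (mul_mem (pow_mem hone _) (pow_mem hone _))
    (pow_mem hone _)) (natCast_mem S _)) (natCast_mem S _)) (natCast_mem S _)) hmem
end
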